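/- arXiv:math/0407297 — 6 statements merged into one kernel-verified Lean document; each statement's English description precedes it below -/
import Mathlib

section
/- Let θ₀ < θ₁ < θ₀ + 2π be real numbers and let D be a nonempty open convex subset of ℂ with D ⊆ S ∩ U and A ⊆ ∂D (where A is the closed arc of the unit circle over [θ₀, θ₁] and S is the open sector over (θ₀, θ₁)). Then the set D* := D ∪ A° ∪ ι(D) — the union of D, the open arc A°, and the image of D under inversion in the unit circle — is a convex subset of ℂ. -/
open Set Real
open Complex (I)
open scoped Complex

/-!
Since `0 ∉ D` while the arc lies in the closure of `D`, separating `0` from `D` shows that the arc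
spans an angle at most `π`; hence the sector `S` is convex and every convex combination `v` of
points of `D* = D ∪ A° ∪ ι(D)` is `r e^{iχ}` with `e^{iχ} ∈ A°`. Let `w` be `v` if `r < 1` and
`ι(v) = r⁻¹ e^{iχ}` if `r > 1`, and suppose `w ∉ D`; take an `ℝ`-linear `f` with `f < c := f(w)`
on `D`. If `c > 0`, then `f(w) = |w| f(e^{iχ}) ≤ |w| c < c` as `e^{iχ} ∈ closure D`. If `c ≤ 0`,
then `f < c · max(1, |z|²)` on all of `D*` (on `ι(D)` because `ι(z) = z / |z|²`, on `A°` because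
`f` cannot attain a nonpositive maximum over `A` at an interior point unless `f = 0`), and this
strict sublevel set of a convex function is convex, so it contains `v`; but `f(v) = c · max(1, r²)`.
-/

namespace ReflectedConvexDomain

section Functional

variable (f : ℂ →L[ℝ] ℝ)

lemma map_eq_re_mul_add_im_mul (z : ℂ) : f z = z.re * f 1 + z.im * f I := by
  calc f z = f (z.re • 1 + z.im • I) := by congr 1; apply Complex.ext <;> simp
    _ = z.re * f 1 + z.im * f I := by simp only [map_add, map_smul, smul_eq_mul]

lemma map_exp_mul_I (θ : ℝ) : f (cexp (θ * I)) = cos θ * f 1 + sin θ * f I := by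
  rw [map_eq_re_mul_add_im_mul, Complex.exp_ofReal_mul_I_re, Complex.exp_ofReal_mul_I_im]

lemma map_ofReal_mul (r : ℝ) (z : ℂ) : f (r * z) = r * f z := by
  rw [← Complex.real_smul, map_smul, smul_eq_mul]

lemma eq_zero_of_map_exp_mul_I_eq_zero {μ ε : ℝ} (hε : sin ε ≠ 0)
    (h₁ : f (cexp (μ * I)) = 0) (h₂ : f (cexp ((μ + ε : ℝ) * I)) = 0) : f = 0 := by
  rw [map_exp_mul_I] at h₁ h₂
  rw [cos_add, sin_add] at h₂
  have hrot : cos μ * f I - sin μ * f 1 = 0 := by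
    refine (mul_eq_zero.mp ?_).resolve_left hε
    linear_combination h₂ - cos ε * h₁
  have pyth := sin_sq_add_cos_sq μ
  have h1 : f 1 = 0 := by linear_combination cos μ * h₁ - sin μ * hrot - f 1 * pyth
  have hI : f I = 0 := by linear_combination sin μ * h₁ + cos μ * hrot - f I * pyth
  ext z
  simp [map_eq_re_mul_add_im_mul, h1, hI]

lemma map_exp_mul_I_lt {θ₀ θ₁ μ c : ℝ} (hf : f ≠ 0) (hc : c ≤ 0)
    (harc : ∀ θ ∈ Icc θ₀ θ₁, f (cexp (θ * I)) ≤ c) (hμ : μ ∈ Ioo θ₀ θ₁) :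
    f (cexp (μ * I)) < c := by
  refine (harc μ (Ioo_subset_Icc_self hμ)).lt_of_ne fun hμc => hf ?_
  set ε := min (min (μ - θ₀) (θ₁ - μ)) 1 with hε
  have hε₀ : 0 < ε := by simp [hε, hμ.1, hμ.2]
  have hεμ : ε ≤ μ - θ₀ ∧ ε ≤ θ₁ - μ := le_min_iff.1 (min_le_left _ _)
  have hsin : 0 < sin ε :=
    sin_pos_of_pos_of_lt_pi hε₀ ((min_le_right _ _).trans_lt (by linarith [pi_gt_three]))
  have hcos : cos ε < 1 := by nlinarith [sin_sq_add_cos_sq ε, cos_le_one ε]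
  have hplus := harc (μ + ε) ⟨by linarith [hμ.1], by linarith⟩
  have hminus := harc (μ - ε) ⟨by linarith, by linarith [hμ.2]⟩
  -- `e^{i(μ + ε)}` and `e^{i(μ - ε)}` average to `cos ε · e^{iμ}`, so the maximum `c ≤ 0` is `0`
  have hsum : f (cexp ((μ + ε : ℝ) * I)) + f (cexp ((μ - ε : ℝ) * I)) = 2 * cos ε * c := by
    rw [← hμc, map_exp_mul_I, map_exp_mul_I, map_exp_mul_I, cos_add, cos_sub, sin_add, sin_sub]
    ring
  obtain rfl : c = 0 := by nlinarith
  rw [mul_zero] at hsum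
  exact eq_zero_of_map_exp_mul_I_eq_zero f hsin.ne' hμc (by linarith)

end Functional

lemma convex_setOf_lt_mul_max_one_norm_sq {E : Type*} [NormedAddCommGroup E] [NormedSpace ℝ E]
    (f : E →L[ℝ] ℝ) {c : ℝ} (hc : c ≤ 0) : Convex ℝ {z : E | f z < c * max 1 (‖z‖ ^ 2)} := by
  have hmax : ConvexOn ℝ univ fun z : E => max 1 (‖z‖ ^ 2) :=
    (convexOn_const 1 convex_univ).sup
      ((convexOn_norm convex_univ).pow (fun z _ => norm_nonneg z) 2)
  have := (((f : E →ₗ[ℝ] ℝ).convexOn convex_univ).add (hmax.smul (neg_nonneg.2 hc))).convex_lt 0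
  convert this using 1
  ext z
  simp only [mem_ofPred_eq, mem_univ, true_and, Pi.add_apply, smul_eq_mul,
    ContinuousLinearMap.coe_coe]
  constructor <;> intro h <;> linarith

lemma smul_mem_of_forall_lt {E : Type*} [NormedAddCommGroup E] [NormedSpace ℝ E] {D : Set E}
    (hopen : IsOpen D) (hconv : Convex ℝ D) {e : E} (he : e ∈ closure D) {ρ : ℝ} (hρ₀ : 0 ≤ ρ)
    (hρ₁ : ρ < 1) (h : ∀ (f : E →L[ℝ] ℝ) (c : ℝ), c ≤ 0 → (∀ z ∈ D, f z < c) → f (ρ • e) < c) :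
    ρ • e ∈ D := by
  by_contra hw
  obtain ⟨f, hf⟩ := geometric_hahn_banach_open_point hconv hopen hw
  rcases le_or_gt (f (ρ • e)) 0 with hc | hc
  · exact lt_irrefl _ (h f _ hc hf)
  · have hfe : f e ≤ f (ρ • e) :=
      le_on_closure (fun z hz => (hf z hz).le) f.continuous.continuousOn continuousOn_const he
    rw [map_smul, smul_eq_mul] at hc hfe
    nlinarith

lemma inv_conj_eq_inv_norm_sq_mul (z : ℂ) : (starRingEnd ℂ z)⁻¹ = ((‖z‖ ^ 2)⁻¹ : ℝ) * z := by
  rw [Complex.inv_def, Complex.conj_conj, Complex.normSq_conj, Complex.normSq_eq_norm_sq, mul_comm]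

lemma norm_ofReal_mul_exp_mul_I {r : ℝ} (hr : 0 ≤ r) (θ : ℝ) : ‖(r : ℂ) * cexp (θ * I)‖ = r := by
  rw [norm_mul, Complex.norm_exp_ofReal_mul_I, mul_one, Complex.norm_real, norm_of_nonneg hr]

def openSector (θ₀ θ₁ : ℝ) : Set ℂ :=
  {z | ∃ r θ : ℝ, 0 < r ∧ θ₀ < θ ∧ θ < θ₁ ∧ z = r * cexp (θ * I)}

def openArc (θ₀ θ₁ : ℝ) : Set ℂ :=
  {z | ∃ θ : ℝ, θ₀ < θ ∧ θ < θ₁ ∧ z = cexp (θ * I)}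

section Sector

variable {θ₀ θ₁ : ℝ}

lemma zero_notMem_openSector : (0 : ℂ) ∉ openSector θ₀ θ₁ := by
  rintro ⟨r, θ, hr, -, -, h⟩
  have := congrArg norm h
  rw [norm_zero, norm_ofReal_mul_exp_mul_I hr.le] at this
  exact hr.ne this

lemma ofReal_mul_mem_openSector {t : ℝ} (ht : 0 < t) {z : ℂ} (hz : z ∈ openSector θ₀ θ₁) :
    (t : ℂ) * z ∈ openSector θ₀ θ₁ := by
  obtain ⟨r, θ, hr, h₀, h₁, rfl⟩ := hz
  exact ⟨t * r, θ, mul_pos ht hr, h₀, h₁, by push_cast; ring⟩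

lemma im_ofReal_mul_exp_mul_I_mul_exp (r θ α : ℝ) :
    ((r : ℂ) * cexp (θ * I) * cexp (↑(-α) * I)).im = r * sin (θ - α) := by
  rw [mul_assoc, ← Complex.exp_add, ← add_mul, ← Complex.ofReal_add, Complex.im_ofReal_mul,
    Complex.exp_ofReal_mul_I_im, sub_eq_add_neg]

lemma mem_openSector_iff (h : θ₀ < θ₁) (h' : θ₁ ≤ θ₀ + π) {z : ℂ} :
    z ∈ openSector θ₀ θ₁ ↔ 0 < (z * cexp (↑(-θ₀) * I)).im ∧ (z * cexp (↑(-θ₁) * I)).im < 0 := by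
  constructor
  · rintro ⟨r, θ, hr, h₀, h₁, rfl⟩
    rw [im_ofReal_mul_exp_mul_I_mul_exp, im_ofReal_mul_exp_mul_I_mul_exp]
    exact ⟨mul_pos hr (sin_pos_of_pos_of_lt_pi (by linarith) (by linarith)),
      mul_neg_of_pos_of_neg hr (sin_neg_of_neg_of_neg_pi_lt (by linarith) (by linarith))⟩
  · rintro ⟨h₀, h₁⟩
    set u := z * cexp (↑(-θ₀) * I)
    have hu : u ≠ 0 := fun hu => by simp [hu] at h₀
    have harg₀ : 0 < Complex.arg u :=
      (Complex.arg_nonneg_iff.2 h₀.le).lt_of_ne fun h => h₀.ne' (Complex.arg_eq_zero_iff.1 h.symm).2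
    have harg₁ : Complex.arg u < π := Complex.arg_lt_pi_iff.2 (Or.inr h₀.ne')
    have hz : z = ‖u‖ * cexp (↑(θ₀ + Complex.arg u) * I) := by
      calc z = u * cexp (θ₀ * I) := by
            rw [mul_assoc, ← Complex.exp_add, ← add_mul, ← Complex.ofReal_add, neg_add_cancel,
              Complex.ofReal_zero, zero_mul, Complex.exp_zero, mul_one]
        _ = ‖u‖ * cexp (Complex.arg u * I) * cexp (θ₀ * I) := by
            rw [Complex.norm_mul_exp_arg_mul_I]
        _ = ‖u‖ * cexp (↑(θ₀ + Complex.arg u) * I) := by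
            rw [Complex.ofReal_add, add_mul, Complex.exp_add]; ring
    refine ⟨‖u‖, θ₀ + Complex.arg u, norm_pos_iff.2 hu, by linarith, ?_, hz⟩
    by_contra! hle
    rw [hz, im_ofReal_mul_exp_mul_I_mul_exp] at h₁
    nlinarith [sin_nonneg_of_nonneg_of_le_pi (x := θ₀ + Complex.arg u - θ₁) (by linarith)
      (by linarith), norm_nonneg u]

lemma convex_openSector (h : θ₀ < θ₁) (h' : θ₁ ≤ θ₀ + π) : Convex ℝ (openSector θ₀ θ₁) := by
  have hlin (w : ℂ) : IsLinearMap ℝ fun z : ℂ => (z * w).im :=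
    ⟨fun x y => by simp only [add_mul, Complex.add_im],
      fun t x => by simp only [smul_mul_assoc, Complex.smul_im, smul_eq_mul]⟩
  rw [show openSector θ₀ θ₁ = {z | 0 < (z * cexp (↑(-θ₀) * I)).im} ∩
      {z | (z * cexp (↑(-θ₁) * I)).im < 0} from ext fun z => mem_openSector_iff h h']
  exact (convex_halfSpace_gt (hlin _) 0).inter (convex_halfSpace_lt (hlin _) 0)

lemma le_add_pi_of_arc_subset_closure {D : Set ℂ} (hne : D.Nonempty) (hopen : IsOpen D)
    (hconv : Convex ℝ D) (h0 : (0 : ℂ) ∉ D) (hcl : ∀ θ ∈ Icc θ₀ θ₁, cexp (θ * I) ∈ closure D) :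
    θ₁ ≤ θ₀ + π := by
  by_contra! hlt
  obtain ⟨f, hf⟩ := geometric_hahn_banach_open_point hconv hopen h0
  rw [map_zero] at hf
  have hf0 : f ≠ 0 := fun h => by
    obtain ⟨d, hd⟩ := hne
    simpa [h] using hf d hd
  have harc (θ : ℝ) (hθ : θ ∈ Icc θ₀ θ₁) : f (cexp (θ * I)) ≤ 0 :=
    le_on_closure (fun z hz => (hf z hz).le) f.continuous.continuousOn continuousOn_const (hcl θ hθ)
  -- the arc contains both `e^{iμ}` and `e^{i(μ + π)} = -e^{iμ}`
  have hμ := map_exp_mul_I_lt f hf0 le_rfl harc (μ := (θ₀ + θ₁ - π) / 2)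
    ⟨by linarith, by linarith [pi_pos]⟩
  have hμπ := harc ((θ₀ + θ₁ - π) / 2 + π) ⟨by linarith [pi_pos], by linarith⟩
  rw [Complex.ofReal_add, add_mul, Complex.exp_add, Complex.exp_pi_mul_I, mul_neg_one,
    map_neg] at hμπ
  linarith

lemma union_subset_openSector {D : Set ℂ} (hsub : D ⊆ openSector θ₀ θ₁) :
    D ∪ openArc θ₀ θ₁ ∪ (fun z : ℂ => (starRingEnd ℂ z)⁻¹) '' D ⊆ openSector θ₀ θ₁ := by
  rintro _ ((hz | ⟨θ, h₀, h₁, rfl⟩) | ⟨z, hz, rfl⟩)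
  · exact hsub hz
  · exact ⟨1, θ, one_pos, h₀, h₁, by simp⟩
  · have hz0 : z ≠ 0 := fun h => zero_notMem_openSector (h ▸ hsub hz)
    show (starRingEnd ℂ z)⁻¹ ∈ openSector θ₀ θ₁
    rw [inv_conj_eq_inv_norm_sq_mul]
    exact ofReal_mul_mem_openSector (by positivity) (hsub hz)

end Sector

lemma union_subset_setOf_lt_mul_max_one_norm_sq {θ₀ θ₁ : ℝ} {D : Set ℂ} (hne : D.Nonempty)
    (hball : ∀ z ∈ D, ‖z‖ < 1) (hcl : ∀ θ ∈ Icc θ₀ θ₁, cexp (θ * I) ∈ closure D)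
    {f : ℂ →L[ℝ] ℝ} {c : ℝ} (hc : c ≤ 0) (hD : ∀ z ∈ D, f z < c) :
    D ∪ openArc θ₀ θ₁ ∪ (fun z : ℂ => (starRingEnd ℂ z)⁻¹) '' D ⊆
      {z | f z < c * max 1 (‖z‖ ^ 2)} := by
  have hf : f ≠ 0 := fun h => by
    obtain ⟨d, hd⟩ := hne
    linarith [hD d hd, show f d = 0 by simp [h]]
  have harc (θ : ℝ) (hθ : θ ∈ Icc θ₀ θ₁) : f (cexp (θ * I)) ≤ c :=
    le_on_closure (fun z hz => (hD z hz).le) f.continuous.continuousOn continuousOn_const (hcl θ hθ)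
  rintro z ((hz | ⟨θ, h₀, h₁, rfl⟩) | ⟨z, hz, rfl⟩)
  · have : ‖z‖ ^ 2 ≤ 1 := by nlinarith [hball z hz, norm_nonneg z]
    simpa [max_eq_left this] using hD z hz
  · simpa [Complex.norm_exp_ofReal_mul_I] using map_exp_mul_I_lt f hf hc harc ⟨h₀, h₁⟩
  · have hz0 : z ≠ 0 := by
      rintro rfl
      linarith [hD 0 hz, map_zero f]
    have hz1 : ‖z‖ ^ 2 ≤ 1 := by nlinarith [hball z hz, norm_nonneg z]
    set t := (‖z‖ ^ 2)⁻¹ with ht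
    have ht1 : 1 ≤ t := one_le_inv₀ (by positivity) |>.2 hz1
    have hnorm : ‖(t : ℂ) * z‖ ^ 2 = t := by
      rw [norm_mul, Complex.norm_real, norm_of_nonneg (by positivity), mul_pow, ht]
      field_simp
    show f (starRingEnd ℂ z)⁻¹ < c * max 1 (‖(starRingEnd ℂ z)⁻¹‖ ^ 2)
    rw [inv_conj_eq_inv_norm_sq_mul, hnorm, max_eq_right ht1, map_ofReal_mul, mul_comm c]
    exact mul_lt_mul_of_pos_left (hD z hz) (by positivity)

lemma ofReal_mul_mem_union_image_of_forall_lt {D : Set ℂ} (hopen : IsOpen D)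
    (hconv : Convex ℝ D) {e : ℂ} (he : e ∈ closure D) (he₁ : ‖e‖ = 1) {r : ℝ} (hr : 0 < r)
    (hr₁ : r ≠ 1)
    (h : ∀ (f : ℂ →L[ℝ] ℝ) (c : ℝ), c ≤ 0 → (∀ z ∈ D, f z < c) → f (r * e) < c * max 1 (r ^ 2)) :
    (r : ℂ) * e ∈ D ∪ (fun z : ℂ => (starRingEnd ℂ z)⁻¹) '' D := by
  rcases hr₁.lt_or_gt with hr₁ | hr₁
  · left
    rw [← Complex.real_smul]
    refine smul_mem_of_forall_lt hopen hconv he hr.le hr₁ fun f c hc hD => ?_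
    have := h f c hc hD
    rwa [max_eq_left (by nlinarith), mul_one, ← Complex.real_smul] at this
  · right
    refine ⟨(r⁻¹ : ℝ) * e, ?_, ?_⟩
    · rw [← Complex.real_smul]
      refine smul_mem_of_forall_lt hopen hconv he (by positivity) (inv_lt_one_of_one_lt₀ hr₁)
        fun f c hc hD => ?_
      have := h f c hc hD
      rw [max_eq_right (by nlinarith), map_ofReal_mul] at this
      rw [map_smul, smul_eq_mul, inv_mul_lt_iff₀ hr]
      nlinarith
    · show (starRingEnd ℂ _)⁻¹ = _
      rw [inv_conj_eq_inv_norm_sq_mul, norm_mul, Complex.norm_real, he₁, mul_one,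
        norm_of_nonneg (by positivity), ← mul_assoc, ← Complex.ofReal_mul]
      field_simp

end ReflectedConvexDomain

open ReflectedConvexDomain

theorem stmt_0_general (θ₀ θ₁ : ℝ) (hθ : θ₀ < θ₁)
    (D : Set ℂ) (hne : D.Nonempty) (hopen : IsOpen D) (hconv : Convex ℝ D)
    (hsub : D ⊆
      {z : ℂ | ∃ r θ : ℝ, 0 < r ∧ θ₀ < θ ∧ θ < θ₁ ∧ z = r * Complex.exp (θ * Complex.I)} ∩
      {z : ℂ | ‖z‖ < 1})
    (hA : {z : ℂ | ∃ θ : ℝ, θ₀ ≤ θ ∧ θ ≤ θ₁ ∧ z = Complex.exp (θ * Complex.I)} ⊆ frontier D) :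
    Convex ℝ (D ∪ {z : ℂ | ∃ θ : ℝ, θ₀ < θ ∧ θ < θ₁ ∧ z = Complex.exp (θ * Complex.I)} ∪
      (fun z : ℂ => (starRingEnd ℂ z)⁻¹) '' D) := by
  have hcl (θ : ℝ) (hθ : θ ∈ Icc θ₀ θ₁) : cexp (θ * I) ∈ closure D :=
    frontier_subset_closure (hA ⟨θ, hθ.1, hθ.2, rfl⟩)
  have hπ : θ₁ ≤ θ₀ + π := le_add_pi_of_arc_subset_closure hne hopen hconv
    (fun h => zero_notMem_openSector (hsub h).1) hcl
  intro x hx y hy a b ha hb hab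
  have hsector := union_subset_openSector fun z hz => (hsub hz).1
  obtain ⟨r, χ, hr, hχ₀, hχ₁, hv⟩ :=
    convex_openSector hθ hπ (hsector hx) (hsector hy) ha hb hab
  rw [hv]
  rcases eq_or_ne r 1 with rfl | hr₁
  · exact Or.inl (Or.inr ⟨χ, hχ₀, hχ₁, by simp⟩)
  have hsep (f : ℂ →L[ℝ] ℝ) (c : ℝ) (hc : c ≤ 0) (hD : ∀ z ∈ D, f z < c) :
      f (r * cexp (χ * I)) < c * max 1 (r ^ 2) := by
    have hsub' :=
      union_subset_setOf_lt_mul_max_one_norm_sq hne (fun z hz => (hsub hz).2) hcl hc hD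
    simpa only [hv, mem_ofPred_eq, norm_ofReal_mul_exp_mul_I hr.le] using
      convex_setOf_lt_mul_max_one_norm_sq f hc (hsub' hx) (hsub' hy) ha hb hab
  exact (ofReal_mul_mem_union_image_of_forall_lt hopen hconv (hcl χ ⟨hχ₀.le, hχ₁.le⟩)
    (Complex.norm_exp_ofReal_mul_I χ) hr hr₁ hsep).imp_left Or.inl

/-- If `D` is a nonempty open convex subset of `ℂ` contained in the
open sector `S` over `(θ₀, θ₁)` intersected with the open unit disk `U`, and the
closed arc `A` of the unit circle over `[θ₀, θ₁]` is contained in the frontier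
of `D`, then `D ∪ A° ∪ ι(D)` is convex, where `A°` is the open arc and
`ι(z) = 1/conj(z)` is inversion in the unit circle. -/
theorem stmt_0 (θ₀ θ₁ : ℝ) (hθ : θ₀ < θ₁) (hθ' : θ₁ < θ₀ + 2 * π)
    (D : Set ℂ) (hne : D.Nonempty) (hopen : IsOpen D) (hconv : Convex ℝ D)
    (hsub : D ⊆
      {z : ℂ | ∃ r θ : ℝ, 0 < r ∧ θ₀ < θ ∧ θ < θ₁ ∧ z = r * Complex.exp (θ * Complex.I)} ∩
      {z : ℂ | ‖z‖ < 1})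
    (hA : {z : ℂ | ∃ θ : ℝ, θ₀ ≤ θ ∧ θ ≤ θ₁ ∧ z = Complex.exp (θ * Complex.I)} ⊆ frontier D) :
    Convex ℝ (D ∪ {z : ℂ | ∃ θ : ℝ, θ₀ < θ ∧ θ < θ₁ ∧ z = Complex.exp (θ * Complex.I)} ∪
      (fun z : ℂ => (starRingEnd ℂ z)⁻¹) '' D) :=
  stmt_0_general θ₀ θ₁ hθ D hne hopen hconv hsub hA
end

section
/- Let θ₀ < θ₁ < θ₀ + 2π be real numbers and let D be a nonempty open convex subset of ℂ with D ⊆ S ∩ U and A ⊆ ∂D. Write D_s = ι(D) and D* = D ∪ A° ∪ D_s. Then D* is convex if and only if the following holds: for every w₁ ∈ D_s and every w₂ ∈ A° ∪ D_s such that the closed line segment [w₁, w₂] intersects the open arc A° in a set that is either empty or equal to {w₂}, one has [w₁, w₂] ⊆ D*. -/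
open Complex Set Real

/-!
Since `0 ∉ D` while the closed arc lies in `closure D`, a supporting line of `D` through `0` shows
that the arc spans at most `π`. Hence the open sector `S` is convex; it contains
`D* = D ∪ A° ∪ D_s`, so any point of a segment of `D*` lying on the unit circle lies in `A°`.
A supporting line at a point of a chord of `A°` would make `re (c * exp (θ * I))` maximal over the
arc at both ends of the chord, which is impossible for a chord shorter than a half-turn; so the
chords lie in `D` and `D ∪ A°` is convex. Finally, a segment from `w₁ ∈ D_s` to a point `w₂` of `D*`
that meets the circle is cut at its first crossing `p` seen from `w₁` and, when `w₂ ∈ D_s`, at the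
first crossing `q` seen from `w₂`: the pieces `[w₁, p]` and `[q, w₂]` meet `A°` only at their
endpoint on the circle, so the hypothesis covers them, and `[p, q]` lies in `D ∪ A°`.
-/

section Segment

variable {E : Type*} [NormedAddCommGroup E] [NormedSpace ℝ E]

theorem segment_subset_union_of_mem {x y p : E} (hp : p ∈ segment ℝ x y) :
    segment ℝ x y ⊆ segment ℝ x p ∪ segment ℝ p y := by
  intro w hw
  rw [mem_segment_iff_wbtw] at hp hw
  obtain ⟨s, hs, rfl⟩ := hp
  obtain ⟨t, ht, rfl⟩ := hw
  rcases wbtw_or_wbtw_smul_vadd_of_nonneg x (y - x) ht.1 hs.1 with h | h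
  · exact Or.inl h.mem_segment
  · exact Or.inr (Wbtw.trans_left_right ⟨t, ht, rfl⟩ h).mem_segment

theorem exists_mem_segment_inter_eq_singleton {C : Set E} (hC : IsClosed C) {x y : E}
    (hy : y ∈ C) : ∃ p ∈ segment ℝ x y, p ∈ C ∧ segment ℝ x p ∩ C = {p} := by
  have hK : IsCompact (segment ℝ x y ∩ C) := by
    rw [segment_eq_image_lineMap]
    exact (isCompact_Icc.image (AffineMap.lineMap_continuous)).inter_right hC
  obtain ⟨p, ⟨hpxy, hpC⟩, hmin⟩ := hK.exists_isMinOn ⟨y, right_mem_segment ℝ x y, hy⟩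
    (continuous_const.dist continuous_id).continuousOn
  refine ⟨p, hpxy, hpC, Subset.antisymm ?_ (singleton_subset_iff.2 ⟨right_mem_segment ℝ x p, hpC⟩)⟩
  rintro w ⟨hw, hwC⟩
  have hwxy : w ∈ segment ℝ x y :=
    (convex_segment x y).segment_subset (left_mem_segment ℝ x y) hpxy hw
  have hle : dist x p ≤ dist x w := hmin ⟨hwxy, hwC⟩
  have hsum := dist_add_dist_of_mem_segment hw
  exact dist_le_zero.1 (by linarith)

theorem exists_norm_eq_mem_segment {x y : E} {c : ℝ} (hy : ‖y‖ ≤ c) (hx : c ≤ ‖x‖) :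
    ∃ r ∈ segment ℝ x y, ‖r‖ = c :=
  (convex_segment x y).isPreconnected.intermediate_value (right_mem_segment ℝ x y)
    (left_mem_segment ℝ x y) continuous_norm.continuousOn ⟨hy, hx⟩

theorem Convex.union_of_subset_closure {s t : Set E} (hs : Convex ℝ s) (hso : IsOpen s)
    (ht : t ⊆ closure s) (hst : ∀ x ∈ t, ∀ y ∈ t, x ≠ y → openSegment ℝ x y ⊆ s) :
    Convex ℝ (s ∪ t) := by
  have hsub : ∀ x ∈ s, ∀ y ∈ s ∪ t, openSegment ℝ x y ⊆ s := fun x hx y hy => by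
    have hy' : y ∈ closure s := hy.elim (fun h => subset_closure h) (fun h => ht h)
    simpa [hso.interior_eq] using
      hs.openSegment_interior_closure_subset_interior (hso.interior_eq.symm ▸ hx) hy'
  refine convex_iff_openSegment_subset.2 fun x hx y hy => ?_
  rcases hx with hxs | hxt
  · exact (hsub x hxs y hy).trans subset_union_left
  rcases hy with hys | hyt
  · exact openSegment_symm ℝ x y ▸ (hsub y hys x (Or.inr hxt)).trans subset_union_left
  rcases eq_or_ne x y with rfl | hxy
  · simpa [openSegment_same] using Or.inr hxt
  · exact (hst x hxt y hyt hxy).trans subset_union_left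

end Segment

section SegmentCondition

variable {E : Type*} [NormedAddCommGroup E] [NormedSpace ℝ E] {P Q arc : Set E}

/- In the application `P = D ∪ A°`, `Q = ι(D)` and `arc = A°`. -/

theorem exists_mem_arc_segment_subset (harcP : arc ⊆ P) (harc : arc ⊆ Metric.sphere 0 1)
    (hsph : ∀ x ∈ P ∪ Q, ∀ y ∈ P ∪ Q, segment ℝ x y ∩ Metric.sphere 0 1 ⊆ arc)
    (H : ∀ w₁ ∈ Q, ∀ w₂ ∈ arc ∪ Q,
      (segment ℝ w₁ w₂ ∩ arc = ∅ ∨ segment ℝ w₁ w₂ ∩ arc = {w₂}) → segment ℝ w₁ w₂ ⊆ P ∪ Q)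
    {x r : E} (hx : x ∈ Q) (hr : r ∈ arc) :
    ∃ p ∈ segment ℝ x r, p ∈ arc ∧ segment ℝ x p ⊆ P ∪ Q := by
  obtain ⟨p, hpxr, hpsph, hxp⟩ :=
    exists_mem_segment_inter_eq_singleton (x := x) Metric.isClosed_sphere (harc hr)
  have hparc : p ∈ arc := hsph x (Or.inr hx) r (Or.inl (harcP hr)) ⟨hpxr, hpsph⟩
  refine ⟨p, hpxr, hparc, H x hx p (Or.inl hparc) (Or.inr ?_)⟩
  exact Subset.antisymm (hxp ▸ inter_subset_inter_right _ harc)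
    (singleton_subset_iff.2 ⟨right_mem_segment ℝ x p, hparc⟩)

theorem segment_subset_union_of_segment_condition (hP : Convex ℝ P)
    (hPball : P ⊆ Metric.closedBall 0 1) (hQ : ∀ x ∈ Q, 1 < ‖x‖) (harcP : arc ⊆ P)
    (harc : arc ⊆ Metric.sphere 0 1)
    (hsph : ∀ x ∈ P ∪ Q, ∀ y ∈ P ∪ Q, segment ℝ x y ∩ Metric.sphere 0 1 ⊆ arc)
    (H : ∀ w₁ ∈ Q, ∀ w₂ ∈ arc ∪ Q,
      (segment ℝ w₁ w₂ ∩ arc = ∅ ∨ segment ℝ w₁ w₂ ∩ arc = {w₂}) → segment ℝ w₁ w₂ ⊆ P ∪ Q)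
    {x y : E} (hx : x ∈ Q) (hy : y ∈ P ∪ Q) : segment ℝ x y ⊆ P ∪ Q := by
  have hcross : (segment ℝ x y ∩ arc).Nonempty ∨ (y ∈ Q ∧ segment ℝ x y ∩ arc = ∅) := by
    rcases hy with hyP | hyQ
    · obtain ⟨r, hrxy, hr⟩ := exists_norm_eq_mem_segment
        (mem_closedBall_zero_iff.1 (hPball hyP)) (hQ x hx).le
      exact Or.inl ⟨r, hrxy,
        hsph x (Or.inr hx) y (Or.inl hyP) ⟨hrxy, mem_sphere_zero_iff_norm.2 hr⟩⟩
    · exact (em _).imp_right fun h => ⟨hyQ, not_nonempty_iff_eq_empty.1 h⟩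
  obtain ⟨r, hrxy, hrarc⟩ | ⟨hyQ, hempty⟩ := hcross
  swap
  · exact H x hx y (Or.inr hyQ) (Or.inl hempty)
  obtain ⟨p, hpxr, hparc, hxp⟩ := exists_mem_arc_segment_subset harcP harc hsph H hx hrarc
  have hpxy : p ∈ segment ℝ x y :=
    (convex_segment x y).segment_subset (left_mem_segment ℝ x y) hrxy hpxr
  obtain ⟨q, hqpy, hqP, hqy⟩ : ∃ q ∈ segment ℝ p y, q ∈ P ∧ segment ℝ q y ⊆ P ∪ Q := by
    rcases hy with hyP | hyQ
    · exact ⟨y, right_mem_segment ℝ p y, hyP, by simpa [segment_same] using Or.inl hyP⟩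
    · obtain ⟨q, hqyp, hqarc, hyq⟩ := exists_mem_arc_segment_subset harcP harc hsph H hyQ hparc
      exact ⟨q, segment_symm ℝ y p ▸ hqyp, harcP hqarc, segment_symm ℝ q y ▸ hyq⟩
  calc segment ℝ x y ⊆ segment ℝ x p ∪ (segment ℝ p q ∪ segment ℝ q y) :=
        (segment_subset_union_of_mem hpxy).trans
          (union_subset_union_right _ (segment_subset_union_of_mem hqpy))
    _ ⊆ P ∪ Q := union_subset hxp
        (union_subset ((hP.segment_subset (harcP hparc) hqP).trans subset_union_left) hqy)

theorem convex_union_of_segment_condition (hP : Convex ℝ P)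
    (hPball : P ⊆ Metric.closedBall 0 1) (hQ : ∀ x ∈ Q, 1 < ‖x‖) (harcP : arc ⊆ P)
    (harc : arc ⊆ Metric.sphere 0 1)
    (hsph : ∀ x ∈ P ∪ Q, ∀ y ∈ P ∪ Q, segment ℝ x y ∩ Metric.sphere 0 1 ⊆ arc)
    (H : ∀ w₁ ∈ Q, ∀ w₂ ∈ arc ∪ Q,
      (segment ℝ w₁ w₂ ∩ arc = ∅ ∨ segment ℝ w₁ w₂ ∩ arc = {w₂}) → segment ℝ w₁ w₂ ⊆ P ∪ Q) :
    Convex ℝ (P ∪ Q) := by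
  have key := fun {x y : E} =>
    segment_subset_union_of_segment_condition hP hPball hQ harcP harc hsph H (x := x) (y := y)
  refine convex_iff_segment_subset.2 fun x hx y hy => ?_
  rcases hx with hxP | hxQ
  · rcases hy with hyP | hyQ
    · exact (hP.segment_subset hxP hyP).trans subset_union_left
    · exact segment_symm ℝ x y ▸ key hyQ (Or.inl hxP)
  · exact key hxQ hy

end SegmentCondition

theorem sub_le_pi_of_cos_nonpos {a b : ℝ} (h : ∀ x ∈ Icc a b, Real.cos x ≤ 0) : b - a ≤ π := by
  by_contra! hlt
  -- `cos x ≤ 0` and `cos (x + π) = -cos x ≤ 0` make `cos` vanish on `[a, a + ε]`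
  set ε := min (b - a - π) 1
  have hε : 0 < ε := lt_min (by linarith) one_pos
  have hεb : ε ≤ b - a - π := min_le_left _ _
  have hε1 : ε ≤ 1 := min_le_right _ _
  have hzero : ∀ x ∈ Icc a (a + ε), Real.cos x = 0 := fun x hx => by
    have h₁ := h x ⟨hx.1, by linarith [hx.2, pi_pos]⟩
    have h₂ := h (x + π) ⟨by linarith [hx.1, pi_pos], by linarith [hx.2]⟩
    rw [Real.cos_add_pi] at h₂
    linarith
  have ha := hzero a ⟨le_rfl, by linarith⟩
  have haε := hzero (a + ε) ⟨by linarith, le_rfl⟩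
  rw [Real.cos_add, ha, zero_mul, zero_sub, neg_eq_zero] at haε
  have hsinε : 0 < Real.sin ε := sin_pos_of_pos_of_lt_pi hε (by linarith [pi_gt_three])
  have hsina : Real.sin a = 0 := (mul_eq_zero.1 haε).resolve_right hsinε.ne'
  have := Real.sin_sq_add_cos_sq a
  rw [hsina, ha] at this
  norm_num at this

theorem Complex.re_mul_exp_ofReal_mul_I (c : ℂ) (θ : ℝ) :
    (c * Complex.exp (θ * I)).re = ‖c‖ * Real.cos (θ + arg c) := by
  conv_lhs => rw [← norm_mul_exp_arg_mul_I c]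
  rw [mul_assoc, ← Complex.exp_add,
    show (arg c : ℂ) * I + θ * I = ((θ + arg c : ℝ) : ℂ) * I by push_cast; ring,
    re_ofReal_mul, exp_ofReal_mul_I_re]

theorem Complex.im_ofReal_mul_exp_mul_exp_neg (r θ φ : ℝ) :
    (r * Complex.exp (θ * I) * Complex.exp (-φ * I)).im = r * Real.sin (θ - φ) := by
  rw [mul_assoc, ← Complex.exp_add,
    show (θ : ℂ) * I + -φ * I = ((θ - φ : ℝ) : ℂ) * I by push_cast; ring,
    im_ofReal_mul, exp_ofReal_mul_I_im]

theorem sin_add_arg_eq_zero_of_isLocalMax {c : ℂ} (hc : c ≠ 0) {x : ℝ}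
    (h : IsLocalMax (fun θ : ℝ => (c * Complex.exp (θ * I)).re) x) : Real.sin (x + arg c) = 0 := by
  simp only [Complex.re_mul_exp_ofReal_mul_I] at h
  have hderiv := h.hasDerivAt_eq_zero (((hasDerivAt_id x).add_const (arg c)).cos.const_mul ‖c‖)
  simpa [hc] using hderiv

theorem exists_ne_zero_re_mul_le_of_notMem {D : Set ℂ} (hne : D.Nonempty) (hopen : IsOpen D)
    (hconv : Convex ℝ D) {z : ℂ} (hz : z ∉ D) :
    ∃ c ≠ 0, ∀ a ∈ closure D, (c * a).re ≤ (c * z).re := by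
  obtain ⟨f, hf⟩ := geometric_hahn_banach_open_point hconv hopen hz
  set v := (InnerProductSpace.toDual ℝ ℂ).symm f
  have hfv : ∀ a, f a = (starRingEnd ℂ v * a).re := fun a => by
    rw [← InnerProductSpace.toDual_symm_apply, Complex.inner, mul_comm]
  refine ⟨starRingEnd ℂ v, fun hv => ?_, fun a ha => ?_⟩
  · obtain ⟨d, hd⟩ := hne
    simpa [hfv, hv] using hf d hd
  · simp only [← hfv]
    exact closure_minimal (fun a ha => (hf a ha).le) (isClosed_le f.continuous continuous_const) ha

def sector (θ₀ θ₁ : ℝ) : Set ℂ :=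
  {z : ℂ | ∃ r θ : ℝ, 0 < r ∧ θ₀ < θ ∧ θ < θ₁ ∧ z = r * Complex.exp (θ * Complex.I)}

def openArc (θ₀ θ₁ : ℝ) : Set ℂ :=
  {z : ℂ | ∃ θ : ℝ, θ₀ < θ ∧ θ < θ₁ ∧ z = Complex.exp (θ * Complex.I)}

def closedArc (θ₀ θ₁ : ℝ) : Set ℂ :=
  {z : ℂ | ∃ θ : ℝ, θ₀ ≤ θ ∧ θ ≤ θ₁ ∧ z = Complex.exp (θ * Complex.I)}

noncomputable def circleInversion (z : ℂ) : ℂ := (starRingEnd ℂ z)⁻¹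

section Sector

variable {θ₀ θ₁ : ℝ}

theorem sector_eq_inter (hθ : θ₀ ≤ θ₁) (hπ : θ₁ ≤ θ₀ + π) :
    sector θ₀ θ₁ = {z | 0 < (z * Complex.exp (-θ₀ * I)).im} ∩
      {z | (z * Complex.exp (-θ₁ * I)).im < 0} := by
  ext z
  constructor
  · rintro ⟨r, θ, hr, h₀, h₁, rfl⟩
    simp only [mem_inter_iff, mem_ofPred_eq, Complex.im_ofReal_mul_exp_mul_exp_neg]
    exact ⟨mul_pos hr (sin_pos_of_pos_of_lt_pi (by linarith) (by linarith)),
      mul_neg_of_pos_of_neg hr (sin_neg_of_neg_of_neg_pi_lt (by linarith) (by linarith))⟩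
  · rintro ⟨h₀, h₁⟩
    set w := z * Complex.exp (-θ₀ * I)
    have hw : 0 < w.im := h₀
    have hw0 : w ≠ 0 := fun h => by simp [h] at hw
    have harg_pos : 0 < arg w :=
      (arg_nonneg_iff.2 hw.le).lt_of_ne fun h => by
        simp [(arg_eq_zero_iff.1 h.symm).2] at hw
    have harg_lt : arg w < π := arg_lt_pi_iff.2 (Or.inr hw.ne')
    have hz : z = ‖w‖ * Complex.exp ((θ₀ + arg w : ℝ) * I) := by
      calc z = w * Complex.exp (θ₀ * I) := by
            simp only [w, mul_assoc, ← Complex.exp_add]; ring_nf; simp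
        _ = ‖w‖ * Complex.exp ((θ₀ + arg w : ℝ) * I) := by
            conv_lhs => rw [← norm_mul_exp_arg_mul_I w]
            rw [mul_assoc, ← Complex.exp_add]; push_cast; ring_nf
    refine ⟨‖w‖, θ₀ + arg w, norm_pos_iff.2 hw0, by linarith, ?_, hz⟩
    rw [mem_ofPred_eq, hz, Complex.im_ofReal_mul_exp_mul_exp_neg] at h₁
    by_contra! hle
    have := sin_nonneg_of_nonneg_of_le_pi (sub_nonneg.2 hle) (by linarith)
    exact h₁.not_ge (mul_nonneg (norm_nonneg w) this)

theorem convex_sector (hθ : θ₀ ≤ θ₁) (hπ : θ₁ ≤ θ₀ + π) : Convex ℝ (sector θ₀ θ₁) := by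
  rw [sector_eq_inter hθ hπ]
  exact (convex_halfSpace_gt (imLm.comp (LinearMap.mulRight ℝ _)).isLinear 0).inter
    (convex_halfSpace_lt (imLm.comp (LinearMap.mulRight ℝ _)).isLinear 0)

theorem zero_notMem_sector : (0 : ℂ) ∉ sector θ₀ θ₁ := by
  rintro ⟨r, θ, hr, -, -, h⟩
  simpa [hr.ne'] using h.symm

theorem openArc_subset_sector : openArc θ₀ θ₁ ⊆ sector θ₀ θ₁ := by
  rintro z ⟨θ, h₀, h₁, rfl⟩
  exact ⟨1, θ, one_pos, h₀, h₁, by simp⟩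

theorem openArc_subset_sphere : openArc θ₀ θ₁ ⊆ Metric.sphere 0 1 := by
  rintro z ⟨θ, -, -, rfl⟩
  simp [norm_exp_ofReal_mul_I]

theorem sector_inter_sphere_subset_openArc : sector θ₀ θ₁ ∩ Metric.sphere 0 1 ⊆ openArc θ₀ θ₁ := by
  rintro z ⟨⟨r, θ, hr, h₀, h₁, rfl⟩, hz⟩
  have hr1 : r = 1 := by simpa [norm_exp_ofReal_mul_I, abs_of_pos hr] using hz
  exact ⟨θ, h₀, h₁, by simp [hr1]⟩

theorem circleInversion_ofReal_mul_exp (r θ : ℝ) :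
    circleInversion (r * Complex.exp (θ * I)) = (r⁻¹ : ℝ) * Complex.exp (θ * I) := by
  rw [circleInversion, map_mul, conj_ofReal, ← Complex.exp_conj, map_mul, conj_ofReal, conj_I,
    mul_inv, ← Complex.exp_neg, ofReal_inv]
  ring_nf

theorem norm_circleInversion (z : ℂ) : ‖circleInversion z‖ = ‖z‖⁻¹ := by
  rw [circleInversion, norm_inv, Complex.norm_conj]

theorem circleInversion_image_sector_subset :
    circleInversion '' sector θ₀ θ₁ ⊆ sector θ₀ θ₁ := by
  rintro _ ⟨_, ⟨r, θ, hr, h₀, h₁, rfl⟩, rfl⟩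
  exact ⟨r⁻¹, θ, inv_pos.2 hr, h₀, h₁, circleInversion_ofReal_mul_exp r θ⟩

end Sector

section ArcInClosure

variable {θ₀ θ₁ : ℝ} {D : Set ℂ}

theorem le_add_pi_of_closedArc_subset_closure (hne : D.Nonempty) (hopen : IsOpen D)
    (hconv : Convex ℝ D) (h0 : (0 : ℂ) ∉ D) (hA : closedArc θ₀ θ₁ ⊆ closure D) :
    θ₁ ≤ θ₀ + π := by
  obtain ⟨c, hc, hle⟩ := exists_ne_zero_re_mul_le_of_notMem hne hopen hconv h0
  have hcos : ∀ x ∈ Icc (θ₀ + arg c) (θ₁ + arg c), Real.cos x ≤ 0 := fun x hx => by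
    have h := hle _ (hA ⟨x - arg c, by linarith [hx.1], by linarith [hx.2], rfl⟩)
    rw [mul_zero, zero_re, Complex.re_mul_exp_ofReal_mul_I, sub_add_cancel] at h
    exact nonpos_of_mul_nonpos_right h (norm_pos_iff.2 hc)
  linarith [sub_le_pi_of_cos_nonpos hcos]

theorem openSegment_exp_subset_of_closedArc_subset_closure (hne : D.Nonempty)
    (hopen : IsOpen D) (hconv : Convex ℝ D) (hA : closedArc θ₀ θ₁ ⊆ closure D) {α β : ℝ}
    (hα : θ₀ < α) (hαβ : α < β) (hβ : β < θ₁) (hβα : β - α < π) :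
    openSegment ℝ (Complex.exp (α * I)) (Complex.exp (β * I)) ⊆ D := by
  intro z hz
  by_contra hzD
  obtain ⟨c, hc, hle⟩ := exists_ne_zero_re_mul_le_of_notMem hne hopen hconv hzD
  set g : ℝ → ℝ := fun θ => (c * Complex.exp (θ * I)).re
  have hg : ∀ θ ∈ Icc θ₀ θ₁, g θ ≤ (c * z).re := fun θ hθ => hle _ (hA ⟨θ, hθ.1, hθ.2, rfl⟩)
  obtain ⟨a, b, ha, hb, hab, hz⟩ := hz
  have hcomb : (c * z).re = a * g α + b * g β := by
    simp only [← hz, g, Complex.real_smul, mul_add, mul_left_comm c, add_re, re_ofReal_mul]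
  have hgα := sub_nonneg.2 (hg α ⟨hα.le, by linarith⟩)
  have hgβ := sub_nonneg.2 (hg β ⟨by linarith, hβ.le⟩)
  have hsum : a * ((c * z).re - g α) + b * ((c * z).re - g β) = 0 := by
    linear_combination (c * z).re * hab + hcomb
  obtain ⟨hα_max, hβ_max⟩ :=
    (add_eq_zero_iff_of_nonneg (mul_nonneg ha.le hgα) (mul_nonneg hb.le hgβ)).1 hsum
  have hmax : ∀ θ ∈ Ioo θ₀ θ₁, (c * z).re - g θ = 0 → IsLocalMax g θ := fun θ hθ heq =>
    Filter.eventually_of_mem (Icc_mem_nhds hθ.1 hθ.2) fun t ht =>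
      (hg t ht).trans (sub_eq_zero.1 heq).le
  have hα' : Real.sin (α + arg c) = 0 := sin_add_arg_eq_zero_of_isLocalMax hc
    (hmax α ⟨hα, by linarith⟩ ((mul_eq_zero.1 hα_max).resolve_left ha.ne'))
  have hβ' : Real.sin (β + arg c) = 0 := sin_add_arg_eq_zero_of_isLocalMax hc
    (hmax β ⟨by linarith, hβ⟩ ((mul_eq_zero.1 hβ_max).resolve_left hb.ne'))
  have hsin : Real.sin (β - α) = 0 := by
    rw [show β - α = (β + arg c) - (α + arg c) by ring, Real.sin_sub, hα', hβ']
    ring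
  exact (sin_pos_of_pos_of_lt_pi (sub_pos.2 hαβ) hβα).ne' hsin

theorem convex_union_openArc (hne : D.Nonempty) (hopen : IsOpen D) (hconv : Convex ℝ D)
    (hπ : θ₁ ≤ θ₀ + π) (hA : closedArc θ₀ θ₁ ⊆ closure D) : Convex ℝ (D ∪ openArc θ₀ θ₁) := by
  refine hconv.union_of_subset_closure hopen
    (fun z ⟨θ, h₀, h₁, hz⟩ => hA ⟨θ, h₀.le, h₁.le, hz⟩) ?_
  rintro _ ⟨α, hα₀, hα₁, rfl⟩ _ ⟨β, hβ₀, hβ₁, rfl⟩ hne'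
  rcases lt_trichotomy α β with hαβ | rfl | hβα
  · exact openSegment_exp_subset_of_closedArc_subset_closure hne hopen hconv hA hα₀ hαβ hβ₁
      (by linarith)
  · exact absurd rfl hne'
  · rw [openSegment_symm]
    exact openSegment_exp_subset_of_closedArc_subset_closure hne hopen hconv hA hβ₀ hβα hα₁
      (by linarith)

end ArcInClosure

theorem stmt_1_general (θ₀ θ₁ : ℝ) (hθ : θ₀ < θ₁)
    (D : Set ℂ) (hne : D.Nonempty) (hopen : IsOpen D) (hconv : Convex ℝ D)
    (hsub : D ⊆
      {z : ℂ | ∃ r θ : ℝ, 0 < r ∧ θ₀ < θ ∧ θ < θ₁ ∧ z = r * Complex.exp (θ * Complex.I)} ∩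
      {z : ℂ | ‖z‖ < 1})
    (hA : {z : ℂ | ∃ θ : ℝ, θ₀ ≤ θ ∧ θ ≤ θ₁ ∧ z = Complex.exp (θ * Complex.I)} ⊆ frontier D) :
    Convex ℝ (D ∪ {z : ℂ | ∃ θ : ℝ, θ₀ < θ ∧ θ < θ₁ ∧ z = Complex.exp (θ * Complex.I)} ∪
        (fun z : ℂ => (starRingEnd ℂ z)⁻¹) '' D) ↔
      ∀ w₁ ∈ (fun z : ℂ => (starRingEnd ℂ z)⁻¹) '' D,
        ∀ w₂ ∈ {z : ℂ | ∃ θ : ℝ, θ₀ < θ ∧ θ < θ₁ ∧ z = Complex.exp (θ * Complex.I)} ∪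
            (fun z : ℂ => (starRingEnd ℂ z)⁻¹) '' D,
          (segment ℝ w₁ w₂ ∩
              {z : ℂ | ∃ θ : ℝ, θ₀ < θ ∧ θ < θ₁ ∧ z = Complex.exp (θ * Complex.I)} = ∅ ∨
            segment ℝ w₁ w₂ ∩
              {z : ℂ | ∃ θ : ℝ, θ₀ < θ ∧ θ < θ₁ ∧ z = Complex.exp (θ * Complex.I)} = {w₂}) →
          segment ℝ w₁ w₂ ⊆
            D ∪ {z : ℂ | ∃ θ : ℝ, θ₀ < θ ∧ θ < θ₁ ∧ z = Complex.exp (θ * Complex.I)} ∪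
              (fun z : ℂ => (starRingEnd ℂ z)⁻¹) '' D := by
  change Convex ℝ (D ∪ openArc θ₀ θ₁ ∪ circleInversion '' D) ↔ ∀ w₁ ∈ circleInversion '' D,
    ∀ w₂ ∈ openArc θ₀ θ₁ ∪ circleInversion '' D, _ → _
  refine ⟨fun h w₁ hw₁ w₂ hw₂ _ => h.segment_subset (Or.inr hw₁) (hw₂.imp_left Or.inr), fun H => ?_⟩
  have hD : D ⊆ sector θ₀ θ₁ := fun z hz => (hsub hz).1
  have hA' : closedArc θ₀ θ₁ ⊆ closure D := hA.trans frontier_subset_closure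
  have hπ := le_add_pi_of_closedArc_subset_closure hne hopen hconv
    (fun h => zero_notMem_sector (hD h)) hA'
  have hsector : D ∪ openArc θ₀ θ₁ ∪ circleInversion '' D ⊆ sector θ₀ θ₁ :=
    union_subset (union_subset hD openArc_subset_sector)
      ((image_mono hD).trans circleInversion_image_sector_subset)
  refine convex_union_of_segment_condition (convex_union_openArc hne hopen hconv hπ hA')
    (union_subset (fun z hz => Metric.ball_subset_closedBall (mem_ball_zero_iff.2 (hsub hz).2))
      (openArc_subset_sphere.trans Metric.sphere_subset_closedBall))
    ?_ subset_union_right openArc_subset_sphere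
    (fun x hx y hy => (inter_subset_inter_left _
      ((convex_sector hθ.le hπ).segment_subset (hsector hx) (hsector hy))).trans
      sector_inter_sphere_subset_openArc) H
  rintro _ ⟨z, hz, rfl⟩
  rw [norm_circleInversion]
  exact one_lt_inv₀ (norm_pos_iff.2 fun h => zero_notMem_sector (h ▸ hD hz)) |>.2 (hsub hz).2

/-- With `D` as in the main setting, `D_s = ι(D)` and
`D* = D ∪ A° ∪ D_s`, the set `D*` is convex iff for every `w₁ ∈ D_s` and
`w₂ ∈ A° ∪ D_s` such that `[w₁, w₂] ∩ A°` is empty or `{w₂}`, one has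
`[w₁, w₂] ⊆ D*`. -/
theorem stmt_1 (θ₀ θ₁ : ℝ) (hθ : θ₀ < θ₁) (hθ' : θ₁ < θ₀ + 2 * π)
    (D : Set ℂ) (hne : D.Nonempty) (hopen : IsOpen D) (hconv : Convex ℝ D)
    (hsub : D ⊆
      {z : ℂ | ∃ r θ : ℝ, 0 < r ∧ θ₀ < θ ∧ θ < θ₁ ∧ z = r * Complex.exp (θ * Complex.I)} ∩
      {z : ℂ | ‖z‖ < 1})
    (hA : {z : ℂ | ∃ θ : ℝ, θ₀ ≤ θ ∧ θ ≤ θ₁ ∧ z = Complex.exp (θ * Complex.I)} ⊆ frontier D) :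
    Convex ℝ (D ∪ {z : ℂ | ∃ θ : ℝ, θ₀ < θ ∧ θ < θ₁ ∧ z = Complex.exp (θ * Complex.I)} ∪
        (fun z : ℂ => (starRingEnd ℂ z)⁻¹) '' D) ↔
      ∀ w₁ ∈ (fun z : ℂ => (starRingEnd ℂ z)⁻¹) '' D,
        ∀ w₂ ∈ {z : ℂ | ∃ θ : ℝ, θ₀ < θ ∧ θ < θ₁ ∧ z = Complex.exp (θ * Complex.I)} ∪
            (fun z : ℂ => (starRingEnd ℂ z)⁻¹) '' D,
          (segment ℝ w₁ w₂ ∩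
              {z : ℂ | ∃ θ : ℝ, θ₀ < θ ∧ θ < θ₁ ∧ z = Complex.exp (θ * Complex.I)} = ∅ ∨
            segment ℝ w₁ w₂ ∩
              {z : ℂ | ∃ θ : ℝ, θ₀ < θ ∧ θ < θ₁ ∧ z = Complex.exp (θ * Complex.I)} = {w₂}) →
          segment ℝ w₁ w₂ ⊆
            D ∪ {z : ℂ | ∃ θ : ℝ, θ₀ < θ ∧ θ < θ₁ ∧ z = Complex.exp (θ * Complex.I)} ∪
              (fun z : ℂ => (starRingEnd ℂ z)⁻¹) '' D :=
  stmt_1_general θ₀ θ₁ hθ D hne hopen hconv hsub hA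
end

section
/- Let θ₀ < θ₁ < θ₀ + 2π be real numbers and let D be a nonempty open convex subset of ℂ with D ⊆ S ∩ U and A ⊆ ∂D. Let U⁺ = {z ∈ U : Im z > 0} be the open upper half-disk, and let f be a function that is continuous on the closure of U⁺, holomorphic and injective on U⁺, with f(U⁺) = D, f((−1,1)) = A°, and f([−1,1]) ⊆ ∂U. Define F : U → ℂ by F(z) = f(z) when Im z ≥ 0 and F(z) = 1/conj(f(conj z)) when Im z < 0. Then F is holomorphic and injective on U, F agrees with f on U⁺ ∪ (−1,1), and F(U) = D ∪ A° ∪ ι(D). -/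
/-!
On the unit disk, `F` has norm `< 1`, `= 1` and `> 1` exactly on the upper half, on the real
diameter and on the lower half: `f` maps the upper half into `D ⊆ U \ {0}` and the diameter into
the unit circle, and `w ↦ 1 / conj w` swaps the inside and the outside of the circle. The two
formulas agree on the diameter, so `F` is continuous, and it is holomorphic off the real axis.
Morera's theorem then makes it holomorphic on the whole disk: a rectangle crossing the real axis
splits along it into two rectangles, on each of which Cauchy–Goursat applies since it only needs
differentiability in the open rectangle.

Injectivity on each half comes from that of `f`. If two points of the diameter had the same image
`w`, the open mapping theorem would make the images of disjoint neighbourhoods of them both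
contain a neighbourhood of `w`, hence a common point of the open unit disk, which has preimages
only in the upper half, where `F = f` is injective.
-/

open Complex Set Real
open ComplexConjugate Filter Topology Metric
open scoped Interval

theorem eq_of_injOn_inter_preimage_of_nhds_le_map {X Y : Type*} [TopologicalSpace X] [T2Space X]
    [TopologicalSpace Y] {F : X → Y} {s : Set X} {t : Set Y} {a b : X}
    (hinj : InjOn F (s ∩ F ⁻¹' t)) (ha : s ∈ 𝓝 a) (hb : s ∈ 𝓝 b)
    (hFa : 𝓝 (F a) ≤ map F (𝓝 a)) (hFb : 𝓝 (F b) ≤ map F (𝓝 b)) (hab : F a = F b)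
    (ht : F a ∈ closure t) : a = b := by
  by_contra hne
  obtain ⟨u, v, hu, hv, hau, hbv, huv⟩ := t2_separation hne
  have hFu : F '' (s ∩ u) ∈ 𝓝 (F a) := hFa (image_mem_map (inter_mem ha (hu.mem_nhds hau)))
  have hFv : F '' (s ∩ v) ∈ 𝓝 (F a) := hab ▸ hFb (image_mem_map (inter_mem hb (hv.mem_nhds hbv)))
  obtain ⟨_, ⟨⟨z₁, hz₁, rfl⟩, ⟨z₂, hz₂, hz⟩⟩, hzt⟩ :=
    mem_closure_iff_nhds.1 ht _ (inter_mem hFu hFv)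
  have hz₁₂ : z₁ = z₂ := hinj ⟨hz₁.1, hzt⟩ ⟨hz₂.1, by rwa [mem_preimage, hz]⟩ hz.symm
  exact huv.ne_of_mem hz₁.2 hz₂.2 hz₁₂

namespace Complex

section Morera

variable {E : Type*} [NormedAddCommGroup E] {f : ℂ → E}

theorem intervalIntegrable_comp_vertical_of_continuousOn_rectangle {z w : ℂ} {x a b : ℝ}
    (hf : ContinuousOn f (Rectangle z w)) (hx : x ∈ [[z.re, w.re]])
    (hab : [[a, b]] ⊆ [[z.im, w.im]]) :
    IntervalIntegrable (fun y : ℝ ↦ f (x + y * I)) MeasureTheory.volume a b :=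
  (hf.comp (by fun_prop) fun y hy ↦
    by simpa [Rectangle, mem_reProdIm, hx] using hab hy).intervalIntegrable

variable [NormedSpace ℂ E]

theorem wedgeIntegral_add_wedgeIntegral_eq_split {z w : ℂ} {c : ℝ} (hc : c ∈ [[z.im, w.im]])
    (hf : ContinuousOn f (Rectangle z w)) :
    wedgeIntegral z w f + wedgeIntegral w z f =
      (wedgeIntegral z ⟨w.re, c⟩ f + wedgeIntegral ⟨w.re, c⟩ z f) +
        (wedgeIntegral ⟨z.re, c⟩ w f + wedgeIntegral w ⟨z.re, c⟩ f) := by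
  have hlo : [[z.im, c]] ⊆ [[z.im, w.im]] := uIcc_subset_uIcc left_mem_uIcc hc
  have hhi : [[c, w.im]] ⊆ [[z.im, w.im]] := uIcc_subset_uIcc hc right_mem_uIcc
  have hR {a b : ℝ} : [[a, b]] ⊆ [[z.im, w.im]] → IntervalIntegrable _ _ a b :=
    intervalIntegrable_comp_vertical_of_continuousOn_rectangle hf right_mem_uIcc
  have hL {a b : ℝ} : [[a, b]] ⊆ [[z.im, w.im]] → IntervalIntegrable _ _ a b :=
    intervalIntegrable_comp_vertical_of_continuousOn_rectangle hf left_mem_uIcc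
  simp only [wedgeIntegral]
  rw [intervalIntegral.integral_symm z.im w.im,
    ← intervalIntegral.integral_add_adjacent_intervals (hR hlo) (hR hhi),
    ← intervalIntegral.integral_add_adjacent_intervals (hL hlo) (hL hhi),
    intervalIntegral.integral_symm z.im c, intervalIntegral.integral_symm c w.im,
    intervalIntegral.integral_symm z.re w.re, intervalIntegral.integral_symm z.re w.re]
  simp only [smul_add, smul_neg]
  abel

theorem wedgeIntegral_add_wedgeIntegral_eq_zero {V : Set ℂ} {z w : ℂ} (hzw : Rectangle z w ⊆ V)
    (hc : ContinuousOn f V) (hd : ∀ p ∈ V, p.im ≠ 0 → DifferentiableAt ℂ f p)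
    (h0 : 0 ∉ Ioo (min z.im w.im) (max z.im w.im)) :
    wedgeIntegral z w f + wedgeIntegral w z f = 0 := by
  rw [wedgeIntegral_add_wedgeIntegral_eq]
  refine integral_boundary_rect_eq_zero_of_continuousOn_of_differentiableOn f z w (hc.mono hzw)
    fun p hp ↦ (hd p (hzw ?_) fun h ↦ h0 (h ▸ hp.2)).differentiableWithinAt
  exact ⟨Ioo_subset_Icc_self hp.1, Ioo_subset_Icc_self hp.2⟩

variable [CompleteSpace E]

theorem differentiableOn_of_continuousOn_of_differentiableAt_im_ne_zero {V : Set ℂ}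
    (hV : IsOpen V) (hc : ContinuousOn f V) (hd : ∀ z ∈ V, z.im ≠ 0 → DifferentiableAt ℂ f z) :
    DifferentiableOn ℂ f V := by
  refine (isConservativeOn_and_continuousOn_iff_isDifferentiableOn hV).1 ⟨fun z w hzw ↦ ?_, hc⟩
  rw [← add_eq_zero_iff_eq_neg]
  by_cases h0 : (0 : ℝ) ∈ Ioo (min z.im w.im) (max z.im w.im)
  · have h0' : (0 : ℝ) ∈ [[z.im, w.im]] := Ioo_subset_Icc_self h0
    have hlo : Rectangle z ⟨w.re, 0⟩ ⊆ Rectangle z w := fun p hp ↦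
      ⟨hp.1, uIcc_subset_uIcc left_mem_uIcc h0' hp.2⟩
    have hhi : Rectangle ⟨z.re, 0⟩ w ⊆ Rectangle z w := fun p hp ↦
      ⟨hp.1, uIcc_subset_uIcc h0' right_mem_uIcc hp.2⟩
    rw [wedgeIntegral_add_wedgeIntegral_eq_split h0' (hc.mono hzw),
      wedgeIntegral_add_wedgeIntegral_eq_zero (hlo.trans hzw) hc hd (by simpa using le_of_lt),
      wedgeIntegral_add_wedgeIntegral_eq_zero (hhi.trans hzw) hc hd (by simpa using le_of_lt),
      add_zero]
  · exact wedgeIntegral_add_wedgeIntegral_eq_zero hzw hc hd h0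

end Morera

theorem mem_closure_inter_setOf_im_pos {V : Set ℂ} (hV : IsOpen V) {z : ℂ} (hz : z ∈ V)
    (him : 0 ≤ z.im) : z ∈ closure (V ∩ {w | 0 < w.im}) := by
  have hlim : Tendsto (fun t : ℝ ↦ z + t * I) (𝓝[>] 0) (𝓝 z) := by
    have h := (Continuous.tendsto (f := fun t : ℝ ↦ z + t * I) (by fun_prop) 0).mono_left
      (nhdsWithin_le_nhds (s := Ioi 0))
    simpa using h
  refine mem_closure_of_tendsto hlim ?_
  filter_upwards [hlim (hV.mem_nhds hz), self_mem_nhdsWithin] with t htV (ht : 0 < t)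
  exact ⟨htV, by simp; linarith⟩

/-- `f` reflected across the real axis in the source and across the unit circle in the target. -/
noncomputable def circleReflect (f : ℂ → ℂ) (z : ℂ) : ℂ := (conj (f (conj z)))⁻¹

noncomputable def reflectExtend (f : ℂ → ℂ) (z : ℂ) : ℂ :=
  if 0 ≤ z.im then f z else circleReflect f z

variable {f : ℂ → ℂ} {V : Set ℂ} {z : ℂ}

theorem norm_circleReflect : ‖circleReflect f z‖ = ‖f (conj z)‖⁻¹ := by
  simp [circleReflect]

theorem circleReflect_eq_self (hz : z.im = 0) (hf : ‖f z‖ = 1) : circleReflect f z = f z := by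
  rw [circleReflect, conj_eq_iff_im.2 hz, inv_eq_conj (by rwa [norm_conj]), conj_conj]

theorem continuousOn_circleReflect {s : Set ℂ} (hf : ContinuousOn f s) (h0 : ∀ z ∈ s, f z ≠ 0) :
    ContinuousOn (circleReflect f) (conj ⁻¹' s) :=
  show ContinuousOn (fun z ↦ (conj (f (conj z)))⁻¹) _ from
    (continuous_conj.comp_continuousOn
      (hf.comp continuous_conj.continuousOn (mapsTo_preimage _ _))).inv₀
    fun z hz ↦ by simpa using h0 _ hz

theorem _root_.DifferentiableAt.circleReflect (hf : DifferentiableAt ℂ f (conj z))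
    (h0 : f (conj z) ≠ 0) : DifferentiableAt ℂ (circleReflect f) z := by
  have h := hf.conj_conj.inv (by simpa using h0)
  rw [conj_conj] at h
  exact h

theorem reflectExtend_of_nonneg (hz : 0 ≤ z.im) : reflectExtend f z = f z := if_pos hz

theorem reflectExtend_of_neg (hz : z.im < 0) : reflectExtend f z = circleReflect f z :=
  if_neg hz.not_ge

theorem setOf_norm_lt_inter_setOf_im_eq_zero (r : ℝ) :
    {z : ℂ | ‖z‖ < r} ∩ {z | z.im = 0} = ofReal '' Ioo (-r) r := by
  ext z
  constructor
  · rintro ⟨hz, him⟩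
    exact ⟨z.re, abs_lt.1 (abs_re_eq_norm.2 him ▸ hz), Complex.ext rfl him.symm⟩
  · rintro ⟨x, hx, rfl⟩
    exact ⟨by simpa [abs_lt] using hx, ofReal_im x⟩

theorem continuousOn_reflectExtend (hVc : ∀ z ∈ V, conj z ∈ V)
    (hc : ContinuousOn f (V ∩ {z | 0 ≤ z.im})) (h0 : ∀ z ∈ V, 0 < z.im → f z ≠ 0)
    (hreal : ∀ z ∈ V, z.im = 0 → ‖f z‖ = 1) : ContinuousOn (reflectExtend f) V := by
  have hne : ∀ z ∈ V ∩ {z | 0 ≤ z.im}, f z ≠ 0 := by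
    rintro z ⟨hz, him⟩
    obtain h | h := (show 0 ≤ z.im from him).lt_or_eq
    · exact h0 z hz h
    · exact norm_ne_zero_iff.1 (by rw [hreal z hz h.symm]; exact one_ne_zero)
  refine ContinuousOn.if ?_ ?_ ?_
  · rintro z ⟨hz, hfr⟩
    rw [frontier_setOfPred_le_im] at hfr
    exact (circleReflect_eq_self hfr (hreal z hz hfr)).symm
  · rwa [(isClosed_le continuous_const continuous_im).closure_eq]
  · refine (continuousOn_circleReflect hc hne).mono ?_
    rintro z ⟨hz, hcl⟩
    simp only [not_le, closure_setOfPred_im_lt] at hcl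
    exact ⟨hVc z hz, by simpa using hcl⟩

theorem differentiableAt_reflectExtend (hV : IsOpen V) (hVc : ∀ z ∈ V, conj z ∈ V)
    (hd : DifferentiableOn ℂ f (V ∩ {z | 0 < z.im})) (h0 : ∀ z ∈ V, 0 < z.im → f z ≠ 0)
    (hz : z ∈ V) (him : z.im ≠ 0) : DifferentiableAt ℂ (reflectExtend f) z := by
  have hVup : IsOpen (V ∩ {z | 0 < z.im}) := hV.inter (isOpen_lt continuous_const continuous_im)
  rcases him.lt_or_gt with h | h
  · have hzc : conj z ∈ V ∩ {z | 0 < z.im} := ⟨hVc z hz, by simpa using h⟩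
    refine ((hd.differentiableAt (hVup.mem_nhds hzc)).circleReflect
      (h0 _ hzc.1 hzc.2)).congr_of_eventuallyEq ?_
    filter_upwards [(isOpen_lt continuous_im continuous_const).mem_nhds h] with w hw
    exact reflectExtend_of_neg hw
  · refine (hd.differentiableAt (hVup.mem_nhds ⟨hz, h⟩)).congr_of_eventuallyEq ?_
    filter_upwards [(isOpen_lt continuous_const continuous_im).mem_nhds h] with w hw
    exact reflectExtend_of_nonneg hw.le

theorem differentiableOn_reflectExtend (hV : IsOpen V) (hVc : ∀ z ∈ V, conj z ∈ V)
    (hc : ContinuousOn f (V ∩ {z | 0 ≤ z.im})) (hd : DifferentiableOn ℂ f (V ∩ {z | 0 < z.im}))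
    (h0 : ∀ z ∈ V, 0 < z.im → f z ≠ 0) (hreal : ∀ z ∈ V, z.im = 0 → ‖f z‖ = 1) :
    DifferentiableOn ℂ (reflectExtend f) V :=
  differentiableOn_of_continuousOn_of_differentiableAt_im_ne_zero hV
    (continuousOn_reflectExtend hVc hc h0 hreal)
    fun _ hz him ↦ differentiableAt_reflectExtend hV hVc hd h0 hz him

theorem one_lt_norm_reflectExtend (hVc : ∀ z ∈ V, conj z ∈ V)
    (h0 : ∀ z ∈ V, 0 < z.im → f z ≠ 0) (hlt : ∀ z ∈ V, 0 < z.im → ‖f z‖ < 1) (hz : z ∈ V)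
    (him : z.im < 0) : 1 < ‖reflectExtend f z‖ := by
  have him' : 0 < (conj z).im := by simpa using him
  rw [reflectExtend_of_neg him, norm_circleReflect]
  exact (one_lt_inv₀ (norm_pos_iff.2 (h0 _ (hVc z hz) him'))).2 (hlt _ (hVc z hz) him')

theorem norm_reflectExtend_lt_one_iff (hVc : ∀ z ∈ V, conj z ∈ V)
    (h0 : ∀ z ∈ V, 0 < z.im → f z ≠ 0) (hlt : ∀ z ∈ V, 0 < z.im → ‖f z‖ < 1)
    (hreal : ∀ z ∈ V, z.im = 0 → ‖f z‖ = 1) (hz : z ∈ V) :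
    ‖reflectExtend f z‖ < 1 ↔ 0 < z.im := by
  rcases lt_trichotomy z.im 0 with h | h | h
  · exact iff_of_false (lt_asymm (one_lt_norm_reflectExtend hVc h0 hlt hz h)) (lt_asymm h)
  · simp [reflectExtend_of_nonneg h.ge, hreal z hz h, h]
  · exact iff_of_true (reflectExtend_of_nonneg (f := f) h.le ▸ hlt z hz h) h

theorem norm_reflectExtend_eq_one_iff (hVc : ∀ z ∈ V, conj z ∈ V)
    (h0 : ∀ z ∈ V, 0 < z.im → f z ≠ 0) (hlt : ∀ z ∈ V, 0 < z.im → ‖f z‖ < 1)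
    (hreal : ∀ z ∈ V, z.im = 0 → ‖f z‖ = 1) (hz : z ∈ V) :
    ‖reflectExtend f z‖ = 1 ↔ z.im = 0 := by
  rcases lt_trichotomy z.im 0 with h | h | h
  · exact iff_of_false (one_lt_norm_reflectExtend hVc h0 hlt hz h).ne' h.ne
  · exact iff_of_true (reflectExtend_of_nonneg (f := f) h.ge ▸ hreal z hz h) h
  · exact iff_of_false (reflectExtend_of_nonneg (f := f) h.le ▸ (hlt z hz h).ne) h.ne'

theorem nhds_le_map_reflectExtend (hV : IsOpen V)
    (hdiff : DifferentiableOn ℂ (reflectExtend f) V) (hlt : ∀ z ∈ V, 0 < z.im → ‖f z‖ < 1)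
    (hreal : ∀ z ∈ V, z.im = 0 → ‖f z‖ = 1) (hz : z ∈ V) (him : z.im = 0) :
    𝓝 (reflectExtend f z) ≤ map (reflectExtend f) (𝓝 z) := by
  refine (hdiff.analyticAt (hV.mem_nhds hz)).eventually_constant_or_nhds_le_map_nhds.resolve_left
    fun hconst ↦ ?_
  have := mem_closure_iff_nhdsWithin_neBot.1 (mem_closure_inter_setOf_im_pos hV hz him.ge)
  obtain ⟨w, hwz, hw, hwim⟩ :=
    ((eventually_nhdsWithin_of_eventually_nhds hconst).and
      (self_mem_nhdsWithin (s := V ∩ {w | 0 < w.im}))).exists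
  have hlt' := hlt w hw hwim
  rw [← reflectExtend_of_nonneg (f := f) hwim.le, hwz, reflectExtend_of_nonneg him.ge,
    hreal z hz him] at hlt'
  exact lt_irrefl 1 hlt'

theorem injOn_reflectExtend (hV : IsOpen V) (hVc : ∀ z ∈ V, conj z ∈ V)
    (hinj : InjOn f (V ∩ {z | 0 < z.im})) (h0 : ∀ z ∈ V, 0 < z.im → f z ≠ 0)
    (hlt : ∀ z ∈ V, 0 < z.im → ‖f z‖ < 1) (hreal : ∀ z ∈ V, z.im = 0 → ‖f z‖ = 1)
    (hdiff : DifferentiableOn ℂ (reflectExtend f) V) : InjOn (reflectExtend f) V := by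
  intro a ha b hb hab
  have hpos : 0 < a.im ↔ 0 < b.im := by
    rw [← norm_reflectExtend_lt_one_iff hVc h0 hlt hreal ha, hab,
      norm_reflectExtend_lt_one_iff hVc h0 hlt hreal hb]
  have hzero : a.im = 0 ↔ b.im = 0 := by
    rw [← norm_reflectExtend_eq_one_iff hVc h0 hlt hreal ha, hab,
      norm_reflectExtend_eq_one_iff hVc h0 hlt hreal hb]
  rcases lt_trichotomy a.im 0 with h | h | h
  · have hb' : b.im < 0 := lt_of_le_of_ne (not_lt.1 (mt hpos.2 (lt_asymm h))) (mt hzero.2 h.ne)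
    rw [reflectExtend_of_neg h, reflectExtend_of_neg hb', circleReflect, circleReflect, inv_inj,
      (starRingEnd ℂ).injective.eq_iff] at hab
    exact (starRingEnd ℂ).injective
      (hinj ⟨hVc a ha, by simpa using h⟩ ⟨hVc b hb, by simpa using hb'⟩ hab)
  · have hupper : V ∩ reflectExtend f ⁻¹' ball 0 1 ⊆ V ∩ {z | 0 < z.im} := fun z hz ↦
      ⟨hz.1, (norm_reflectExtend_lt_one_iff hVc h0 hlt hreal hz.1).1 (mem_ball_zero_iff.1 hz.2)⟩
    have hinj' : InjOn (reflectExtend f) (V ∩ reflectExtend f ⁻¹' ball 0 1) :=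
      (hinj.congr fun z hz ↦ (reflectExtend_of_nonneg hz.2.le).symm).mono hupper
    refine eq_of_injOn_inter_preimage_of_nhds_le_map hinj' (hV.mem_nhds ha) (hV.mem_nhds hb)
      (nhds_le_map_reflectExtend hV hdiff hlt hreal ha h)
      (nhds_le_map_reflectExtend hV hdiff hlt hreal hb (hzero.1 h)) hab ?_
    rw [closure_ball _ one_ne_zero, mem_closedBall_zero_iff, reflectExtend_of_nonneg h.ge,
      hreal a ha h]
  · rw [reflectExtend_of_nonneg h.le, reflectExtend_of_nonneg (hpos.1 h).le] at hab
    exact hinj ⟨ha, h⟩ ⟨hb, hpos.1 h⟩ hab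

theorem image_reflectExtend (hVc : ∀ z ∈ V, conj z ∈ V) :
    reflectExtend f '' V = f '' (V ∩ {z | 0 < z.im}) ∪ f '' (V ∩ {z | z.im = 0}) ∪
      (fun w ↦ (conj w)⁻¹) '' (f '' (V ∩ {z | 0 < z.im})) := by
  ext w
  constructor
  · rintro ⟨z, hz, rfl⟩
    rcases lt_trichotomy z.im 0 with h | h | h
    · refine Or.inr ⟨f (conj z), ⟨conj z, ⟨hVc z hz, by simpa using h⟩, rfl⟩, ?_⟩
      rw [reflectExtend_of_neg h, circleReflect]
    · exact Or.inl (Or.inr ⟨z, ⟨hz, h⟩, (reflectExtend_of_nonneg h.ge).symm⟩)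
    · exact Or.inl (Or.inl ⟨z, ⟨hz, h⟩, (reflectExtend_of_nonneg h.le).symm⟩)
  · rintro ((⟨z, hz, rfl⟩ | ⟨z, hz, rfl⟩) | ⟨_, ⟨z, hz, rfl⟩, rfl⟩)
    · exact ⟨z, hz.1, reflectExtend_of_nonneg hz.2.le⟩
    · exact ⟨z, hz.1, reflectExtend_of_nonneg hz.2.ge⟩
    · refine ⟨conj z, hVc z hz.1, ?_⟩
      rw [reflectExtend_of_neg (by simpa using hz.2), circleReflect, conj_conj]

end Complex

theorem stmt_2_general (θ₀ θ₁ : ℝ)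
    (D : Set ℂ)
    (hsub : D ⊆
      {z : ℂ | ∃ r θ : ℝ, 0 < r ∧ θ₀ < θ ∧ θ < θ₁ ∧ z = r * Complex.exp (θ * Complex.I)} ∩
      {z : ℂ | ‖z‖ < 1})
    (f : ℂ → ℂ)
    (hf_cont : ContinuousOn f (closure {z : ℂ | ‖z‖ < 1 ∧ 0 < z.im}))
    (hf_holo : DifferentiableOn ℂ f {z : ℂ | ‖z‖ < 1 ∧ 0 < z.im})
    (hf_inj : Set.InjOn f {z : ℂ | ‖z‖ < 1 ∧ 0 < z.im})
    (hf_img : f '' {z : ℂ | ‖z‖ < 1 ∧ 0 < z.im} = D)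
    (hf_arc : f '' ((fun x : ℝ => (x : ℂ)) '' Set.Ioo (-1 : ℝ) 1) =
      {z : ℂ | ∃ θ : ℝ, θ₀ < θ ∧ θ < θ₁ ∧ z = Complex.exp (θ * Complex.I)})
    (F : ℂ → ℂ)
    (hF : ∀ z : ℂ, F z = if 0 ≤ z.im then f z
      else (starRingEnd ℂ (f (starRingEnd ℂ z)))⁻¹) :
    DifferentiableOn ℂ F {z : ℂ | ‖z‖ < 1} ∧
      Set.InjOn F {z : ℂ | ‖z‖ < 1} ∧
      Set.EqOn F f ({z : ℂ | ‖z‖ < 1 ∧ 0 < z.im} ∪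
        (fun x : ℝ => (x : ℂ)) '' Set.Ioo (-1 : ℝ) 1) ∧
      F '' {z : ℂ | ‖z‖ < 1} =
        D ∪ {z : ℂ | ∃ θ : ℝ, θ₀ < θ ∧ θ < θ₁ ∧ z = Complex.exp (θ * Complex.I)} ∪
          (fun z : ℂ => (starRingEnd ℂ z)⁻¹) '' D := by
  obtain rfl : F = reflectExtend f := funext hF
  rw [ofPred_and] at hf_img
  have hU : IsOpen {z : ℂ | ‖z‖ < 1} := isOpen_lt continuous_norm continuous_const
  have hUc : ∀ z ∈ {z : ℂ | ‖z‖ < 1}, conj z ∈ {z : ℂ | ‖z‖ < 1} := fun z hz ↦ by simpa using hz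
  have hreal := setOf_norm_lt_inter_setOf_im_eq_zero 1
  have hfD : ∀ z ∈ {z : ℂ | ‖z‖ < 1}, 0 < z.im → f z ≠ 0 ∧ ‖f z‖ < 1 := fun z hz him ↦ by
    obtain ⟨⟨r, θ, hr, -, -, hfz⟩, hfz1⟩ := hsub (hf_img.subset (mem_image_of_mem f ⟨hz, him⟩))
    exact ⟨by simp [hfz, hr.ne'], hfz1⟩
  have hfA : ∀ z ∈ {z : ℂ | ‖z‖ < 1}, z.im = 0 → ‖f z‖ = 1 := fun z hz him ↦ by
    obtain ⟨θ, -, -, hfz⟩ := hf_arc.subset (mem_image_of_mem f (hreal.subset ⟨hz, him⟩))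
    simp [hfz]
  have hcont : ContinuousOn f ({z : ℂ | ‖z‖ < 1} ∩ {z | 0 ≤ z.im}) :=
    hf_cont.mono fun z hz ↦ mem_closure_inter_setOf_im_pos hU hz.1 hz.2
  have hf0 z hz h := (hfD z hz h).1
  have hdiff := differentiableOn_reflectExtend hU hUc hcont hf_holo hf0 hfA
  refine ⟨hdiff, injOn_reflectExtend hU hUc hf_inj hf0 (fun z hz h ↦ (hfD z hz h).2) hfA hdiff,
    ?_, ?_⟩
  · rintro z (hz | ⟨x, -, rfl⟩)
    exacts [reflectExtend_of_nonneg hz.2.le, reflectExtend_of_nonneg (ofReal_im x).ge]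
  · rw [image_reflectExtend hUc, hreal, hf_img, hf_arc]

/-- Schwarz reflection across the unit circle of a conformal map
`f` of the closed upper half-disk onto `D̄` sending `(-1,1)` to the open arc
`A°` extends `f` to a holomorphic injective map `F` of the unit disk onto
`D ∪ A° ∪ ι(D)`. -/
theorem stmt_2 (θ₀ θ₁ : ℝ) (hθ : θ₀ < θ₁) (hθ' : θ₁ < θ₀ + 2 * π)
    (D : Set ℂ) (hne : D.Nonempty) (hopen : IsOpen D) (hconv : Convex ℝ D)
    (hsub : D ⊆
      {z : ℂ | ∃ r θ : ℝ, 0 < r ∧ θ₀ < θ ∧ θ < θ₁ ∧ z = r * Complex.exp (θ * Complex.I)} ∩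
      {z : ℂ | ‖z‖ < 1})
    (hA : {z : ℂ | ∃ θ : ℝ, θ₀ ≤ θ ∧ θ ≤ θ₁ ∧ z = Complex.exp (θ * Complex.I)} ⊆ frontier D)
    (f : ℂ → ℂ)
    (hf_cont : ContinuousOn f (closure {z : ℂ | ‖z‖ < 1 ∧ 0 < z.im}))
    (hf_holo : DifferentiableOn ℂ f {z : ℂ | ‖z‖ < 1 ∧ 0 < z.im})
    (hf_inj : Set.InjOn f {z : ℂ | ‖z‖ < 1 ∧ 0 < z.im})
    (hf_img : f '' {z : ℂ | ‖z‖ < 1 ∧ 0 < z.im} = D)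
    (hf_arc : f '' ((fun x : ℝ => (x : ℂ)) '' Set.Ioo (-1 : ℝ) 1) =
      {z : ℂ | ∃ θ : ℝ, θ₀ < θ ∧ θ < θ₁ ∧ z = Complex.exp (θ * Complex.I)})
    (hf_circ : f '' ((fun x : ℝ => (x : ℂ)) '' Set.Icc (-1 : ℝ) 1) ⊆
      {z : ℂ | ‖z‖ = 1})
    (F : ℂ → ℂ)
    (hF : ∀ z : ℂ, F z = if 0 ≤ z.im then f z
      else (starRingEnd ℂ (f (starRingEnd ℂ z)))⁻¹) :
    DifferentiableOn ℂ F {z : ℂ | ‖z‖ < 1} ∧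
      Set.InjOn F {z : ℂ | ‖z‖ < 1} ∧
      Set.EqOn F f ({z : ℂ | ‖z‖ < 1 ∧ 0 < z.im} ∪
        (fun x : ℝ => (x : ℂ)) '' Set.Ioo (-1 : ℝ) 1) ∧
      F '' {z : ℂ | ‖z‖ < 1} =
        D ∪ {z : ℂ | ∃ θ : ℝ, θ₀ < θ ∧ θ < θ₁ ∧ z = Complex.exp (θ * Complex.I)} ∪
          (fun z : ℂ => (starRingEnd ℂ z)⁻¹) '' D :=
  stmt_2_general θ₀ θ₁ D hsub f hf_cont hf_holo hf_inj hf_img hf_arc F hF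
end

section
/- Let f be holomorphic on the open unit disk U = {z ∈ ℂ : |z| < 1} with f′(z) ≠ 0 for all z ∈ U, and suppose that Re(1 + z·f″(z)/f′(z)) > 0 for all z ∈ U. Then for every fixed θ ∈ [0, 2π), the function r ↦ r·|f′(r e^{iθ})| is strictly increasing on (0, 1). -/
/-!
Along the ray `z = r e^{iθ}` one computes
`d/dr (r ‖f′(z)‖) = ‖f′(z)‖ + r ‖f′(z)‖ Re(e^{iθ} f″(z)/f′(z)) = ‖f′(z)‖ Re(1 + z f″(z)/f′(z))`,
which is positive by hypothesis.
-/

open Complex Set Real ComplexConjugate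
open scoped InnerProductSpace

theorem HasDerivAt.norm {F : Type*} [NormedAddCommGroup F] [InnerProductSpace ℝ F]
    {h : ℝ → F} {h' : F} {r : ℝ} (hh : HasDerivAt h h' r) (h0 : h r ≠ 0) :
    HasDerivAt (fun t => ‖h t‖) (⟪h r, h'⟫_ℝ / ‖h r‖) r := by
  have := hh.norm_sq.sqrt (by positivity)
  simp only [Real.sqrt_sq (norm_nonneg _)] at this
  convert this using 1
  field_simp

theorem hasDerivAt_mul_norm_comp_ofReal_mul {g : ℂ → ℂ} {g' c : ℂ} {r : ℝ}
    (hg : HasDerivAt g g' (r * c)) (h0 : g (r * c) ≠ 0) :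
    HasDerivAt (fun t : ℝ => t * ‖g (t * c)‖)
      (‖g (r * c)‖ * (1 + r * c * g' / g (r * c)).re) r := by
  have hray : HasDerivAt (fun t : ℝ => g (t * c)) (g' * c) r := by
    simpa using (hg.comp (r : ℂ) ((hasDerivAt_id (r : ℂ)).mul_const c)).comp_ofReal
  refine ((hasDerivAt_id r).mul (hray.norm h0)).congr_deriv ?_
  set A := g (r * c)
  have hA : (0 : ℝ) < ‖A‖ := norm_pos_iff.mpr h0
  have hA' : conj A ≠ 0 := (map_ne_zero _).mpr h0
  have hquot : (r * c * g' / A : ℂ) = (r * (g' * c * conj A) / (‖A‖ ^ 2 : ℝ) : ℂ) := by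
    rw [Complex.ofReal_pow, ← Complex.mul_conj']
    field_simp
  rw [Complex.inner, add_re, one_re, hquot, Complex.div_ofReal_re, Complex.re_ofReal_mul]
  field_simp
  rw [id, mul_comm r]

theorem stmt_4_general (f : ℂ → ℂ)
    (hf_holo : DifferentiableOn ℂ f {z : ℂ | ‖z‖ < 1})
    (hf_deriv : ∀ z : ℂ, ‖z‖ < 1 → deriv f z ≠ 0)
    (hf_re : ∀ z : ℂ, ‖z‖ < 1 →
      0 < (1 + z * deriv (deriv f) z / deriv f z).re)
    (θ : ℝ) :
    StrictMonoOn (fun r : ℝ =>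
      r * ‖deriv f ((r : ℂ) * Complex.exp (θ * Complex.I))‖)
      (Set.Ioo (0 : ℝ) 1) := by
  set c := Complex.exp (θ * Complex.I)
  have hdisk : IsOpen {z : ℂ | ‖z‖ < 1} := isOpen_lt continuous_norm continuous_const
  have hray : ∀ r ∈ Ioo (0 : ℝ) 1, ‖(r : ℂ) * c‖ < 1 := fun r hr => by
    simpa [c, norm_exp_ofReal_mul_I, abs_of_pos hr.1] using hr.2
  have hderiv : ∀ r ∈ Ioo (0 : ℝ) 1, HasDerivAt (fun t : ℝ => t * ‖deriv f (t * c)‖)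
      (‖deriv f (r * c)‖ * (1 + r * c * deriv (deriv f) (r * c) / deriv f (r * c)).re) r :=
    fun r hr => hasDerivAt_mul_norm_comp_ofReal_mul
      ((hf_holo.deriv hdisk).differentiableAt (hdisk.mem_nhds (hray r hr))).hasDerivAt
      (hf_deriv _ (hray r hr))
  refine strictMonoOn_of_deriv_pos (convex_Ioo 0 1)
    (fun r hr => (hderiv r hr).continuousAt.continuousWithinAt) fun r hr => ?_
  rw [interior_Ioo] at hr
  rw [(hderiv r hr).deriv]
  exact mul_pos (norm_pos_iff.mpr (hf_deriv _ (hray r hr))) (hf_re _ (hray r hr))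

/-- If `f` is holomorphic on the unit disk with nonvanishing
derivative and `Re(1 + z f″(z)/f′(z)) > 0` on the disk, then for each fixed
`θ ∈ [0, 2π)` the function `r ↦ r * |f′(r e^{iθ})|` is strictly increasing
on `(0, 1)`. -/
theorem stmt_4 (f : ℂ → ℂ)
    (hf_holo : DifferentiableOn ℂ f {z : ℂ | ‖z‖ < 1})
    (hf_deriv : ∀ z : ℂ, ‖z‖ < 1 → deriv f z ≠ 0)
    (hf_re : ∀ z : ℂ, ‖z‖ < 1 →
      0 < (1 + z * deriv (deriv f) z / deriv f z).re)
    (θ : ℝ) (hθ : θ ∈ Set.Ico 0 (2 * π)) :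
    StrictMonoOn (fun r : ℝ =>
      r * ‖deriv f ((r : ℂ) * Complex.exp (θ * Complex.I))‖)
      (Set.Ioo (0 : ℝ) 1) :=
  stmt_4_general f hf_holo hf_deriv hf_re θ
end

section
/- Let α ∈ (0, π/2) and let D be an open convex subset of ℂ such that D ⊆ {r e^{iθ} : 0 < r < 1, α < θ < π − α} and {e^{iθ} : α ≤ θ ≤ π − α} ⊆ ∂D. Then U \ D is star-shaped with respect to the origin: for every z ∈ U \ D and every t ∈ [0, 1], the point t·z belongs to U \ D, where U = {z ∈ ℂ : |z| < 1} is the open unit disk. -/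
/-!
Suppose `z ∉ D` but `t • z ∈ D` for some `0 ≤ t < 1`. Since `D` lies in the sector, the radial
projection `u = z / ‖z‖` of `t • z` is a point of the arc, hence of `closure D`, and `z` lies
strictly between `t • z` and `u`. An open convex set contains the open segment from any of its
points to a point of its closure, so `z ∈ D`, a contradiction.
-/

open Complex Set Real

theorem smul_mem_openSegment_smul {E : Type*} [AddCommGroup E] [Module ℝ E] (x : E)
    {a b c : ℝ} (hab : a < b) (hbc : b < c) : b • x ∈ openSegment ℝ (a • x) (c • x) := by
  have := image_openSegment ℝ (LinearMap.toSpanSingleton ℝ E x).toAffineMap a c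
  simp only [LinearMap.coe_toAffineMap, LinearMap.toSpanSingleton_apply] at this
  rw [← this, openSegment_eq_Ioo (hab.trans hbc)]
  exact mem_image_of_mem _ ⟨hab, hbc⟩

theorem Convex.starConvex_zero_ball_diff {E : Type*} [NormedAddCommGroup E] [NormedSpace ℝ E]
    {D : Set E} (hopen : IsOpen D) (hconv : Convex ℝ D) (hD₀ : (0 : E) ∉ D)
    (hproj : ∀ w ∈ D, ‖w‖⁻¹ • w ∈ closure D) :
    StarConvex ℝ 0 (Metric.ball 0 1 \ D) := by
  refine starConvex_zero_iff.2 fun z ⟨hz, hzD⟩ t ht₀ ht₁ => ⟨?_, fun htz => hzD ?_⟩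
  · exact starConvex_zero_iff.1 ((convex_ball 0 1).starConvex (Metric.mem_ball_self one_pos))
      hz ht₀ ht₁
  have ht₁' : t < 1 := ht₁.lt_of_ne (by rintro rfl; exact hzD (by simpa using htz))
  have htz₀ : t * ‖z‖ ≠ 0 := by
    rw [← norm_smul_of_nonneg ht₀]; exact norm_ne_zero_iff.2 (ne_of_mem_of_not_mem htz hD₀)
  have hz₀ : 0 < ‖z‖ := (norm_nonneg z).lt_of_ne (by rintro h; simp [← h] at htz₀)
  rw [mem_ball_zero_iff] at hz
  set u := ‖z‖⁻¹ • z
  have hu_mem : u ∈ closure D := by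
    simpa [norm_smul, abs_of_nonneg ht₀, smul_smul, mul_inv, left_ne_zero_of_mul htz₀] using
      hproj _ htz
  have hseg : (‖z‖ : ℝ) • u ∈ openSegment ℝ ((t * ‖z‖) • u) ((1 : ℝ) • u) :=
    smul_mem_openSegment_smul u (mul_lt_of_lt_one_left hz₀ ht₁') hz
  have hu : ∀ s : ℝ, (s * ‖z‖) • u = s • z := fun s => by
    rw [smul_smul, mul_assoc, mul_inv_cancel₀ hz₀.ne', mul_one]
  rw [one_smul, hu, ← one_mul ‖z‖, hu, one_smul] at hseg
  rw [← hopen.interior_eq]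
  exact hconv.openSegment_interior_closure_subset_interior (by rwa [hopen.interior_eq]) hu_mem hseg

theorem stmt_6_general (α : ℝ)
    (D : Set ℂ) (hopen : IsOpen D) (hconv : Convex ℝ D)
    (hsub : D ⊆ {z : ℂ | ∃ r θ : ℝ, 0 < r ∧ r < 1 ∧ α < θ ∧ θ < π - α ∧
      z = r * Complex.exp (θ * Complex.I)})
    (harc : {z : ℂ | ∃ θ : ℝ, α ≤ θ ∧ θ ≤ π - α ∧ z = Complex.exp (θ * Complex.I)} ⊆
      frontier D) :
    ∀ z ∈ {z : ℂ | ‖z‖ < 1} \ D, ∀ t ∈ Set.Icc (0 : ℝ) 1,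
      (t : ℂ) * z ∈ {z : ℂ | ‖z‖ < 1} \ D := by
  have hsector : ∀ w ∈ D, w ≠ 0 ∧ ‖w‖⁻¹ • w ∈ closure D := by
    intro w hw
    obtain ⟨r, θ, hr₀, -, hθ₁, hθ₂, rfl⟩ := hsub hw
    have hnorm : ‖(r : ℂ) * exp (θ * I)‖ = r := by
      rw [norm_mul, norm_exp_ofReal_mul_I, norm_real, norm_of_nonneg hr₀.le, mul_one]
    refine ⟨by rw [← norm_ne_zero_iff, hnorm]; exact hr₀.ne', ?_⟩
    rw [hnorm, real_smul, ← mul_assoc, ← ofReal_mul, inv_mul_cancel₀ hr₀.ne', ofReal_one, one_mul]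
    exact frontier_subset_closure (harc ⟨θ, hθ₁.le, hθ₂.le, rfl⟩)
  have hstar := hconv.starConvex_zero_ball_diff hopen (fun h => (hsector 0 h).1 rfl)
    fun w hw => (hsector w hw).2
  have hball : {z : ℂ | ‖z‖ < 1} = Metric.ball 0 1 := by ext; simp
  rintro z hz t ⟨ht₀, ht₁⟩
  rw [hball] at hz ⊢
  simpa only [real_smul] using starConvex_zero_iff.1 hstar hz ht₀ ht₁

/-- If `α ∈ (0, π/2)` and `D` is an open convex subset of `ℂ`
contained in the sector `{r e^{iθ} : 0 < r < 1, α < θ < π − α}` of the unit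
disk whose frontier contains the arc `{e^{iθ} : α ≤ θ ≤ π − α}`, then
`U \ D` is star-shaped with respect to the origin. -/
theorem stmt_6 (α : ℝ) (hα : α ∈ Set.Ioo 0 (π / 2))
    (D : Set ℂ) (hopen : IsOpen D) (hconv : Convex ℝ D)
    (hsub : D ⊆ {z : ℂ | ∃ r θ : ℝ, 0 < r ∧ r < 1 ∧ α < θ ∧ θ < π - α ∧
      z = r * Complex.exp (θ * Complex.I)})
    (harc : {z : ℂ | ∃ θ : ℝ, α ≤ θ ∧ θ ≤ π - α ∧ z = Complex.exp (θ * Complex.I)} ⊆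
      frontier D) :
    ∀ z ∈ {z : ℂ | ‖z‖ < 1} \ D, ∀ t ∈ Set.Icc (0 : ℝ) 1,
      (t : ℂ) * z ∈ {z : ℂ | ‖z‖ < 1} \ D :=
  stmt_6_general α D hopen hconv hsub harc
end

section
/- Let θ₀ < θ₁ < θ₀ + 2π be real numbers and let D be an open convex subset of ℂ with D ⊆ S ∩ U, A ⊆ ∂D, and 0 ∈ ∂D. Then D is exactly the open circular sector of the unit disk: D = S ∩ U = {r e^{iθ} : 0 < r < 1, θ₀ < θ < θ₁}. -/
open Complex Set Real

/-!
The closure of `D` is convex and contains `0` and the arc `A`, hence every segment from `0` to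
a point of `A`, that is, the closed sector. Since `θ₁ - θ₀ < 2π`, the open sector `S ∩ U` is an
open set, and an open subset of the closure of an open convex set lies in the set itself.
-/

theorem Convex.subset_of_isOpen_of_subset_closure {E : Type*} [AddCommGroup E] [Module ℝ E]
    [TopologicalSpace E] [IsTopologicalAddGroup E] [ContinuousSMul ℝ E] {D O : Set E}
    (hD : Convex ℝ D) (hDo : IsOpen D) (hne : D.Nonempty) (hO : IsOpen O)
    (hOD : O ⊆ closure D) : O ⊆ D := by
  have hO_int : O ⊆ interior (closure D) := interior_maximal hOD hO
  rwa [hD.interior_closure_eq_interior_of_nonempty_interior (by rwa [hDo.interior_eq]),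
    hDo.interior_eq] at hO_int

theorem Complex.isOpen_image_ofReal_mul_exp {s : Set (ℝ × ℝ)} (hs : IsOpen s) {α : ℝ}
    (hsα : s ⊆ Ioi 0 ×ˢ Ioo α (α + 2 * π)) :
    IsOpen ((fun p : ℝ × ℝ => (p.1 : ℂ) * exp (p.2 * I)) '' s) := by
  -- Rotating by `α + π` moves the angles into `(-π, π)`, where polar coordinates are a
  -- homeomorphism.
  set c := α + π
  let shift : ℝ × ℝ ≃ₜ ℝ × ℝ := Homeomorph.addRight (0, -c)
  have htarget : shift '' s ⊆ Complex.polarCoord.target := by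
    rintro _ ⟨p, hp, rfl⟩
    obtain ⟨h1, h2, h3⟩ := hsα hp
    refine ⟨by simpa [shift] using h1, ?_, ?_⟩ <;> simp [shift, c] <;> linarith
  have hrot : (fun p : ℝ × ℝ => (p.1 : ℂ) * exp (p.2 * I)) '' s =
      (exp (c * I) * ·) '' (Complex.polarCoord.symm '' (shift '' s)) := by
    simp only [image_image]
    refine image_congr fun p _ => ?_
    simp only [Complex.polarCoord_symm_apply, shift, Homeomorph.coe_addRight, Prod.fst_add,
      Prod.snd_add, add_zero]
    rw [ofReal_cos, ofReal_sin, ← exp_mul_I, mul_left_comm, ← exp_add]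
    push_cast; ring_nf
  rw [hrot]
  exact (Homeomorph.mulLeft₀ _ (exp_ne_zero _)).isOpenMap _
    (Complex.polarCoord.isOpen_image_symm_of_subset_target (shift.isOpenMap s hs) htarget)

theorem stmt_7_general (θ₀ θ₁ : ℝ) (hθ' : θ₁ < θ₀ + 2 * π)
    (D : Set ℂ) (hopen : IsOpen D) (hconv : Convex ℝ D)
    (hsub : D ⊆
      {z : ℂ | ∃ r θ : ℝ, 0 < r ∧ θ₀ < θ ∧ θ < θ₁ ∧ z = r * Complex.exp (θ * Complex.I)} ∩
      {z : ℂ | ‖z‖ < 1})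
    (hA : {z : ℂ | ∃ θ : ℝ, θ₀ ≤ θ ∧ θ ≤ θ₁ ∧ z = Complex.exp (θ * Complex.I)} ⊆ frontier D)
    (h0 : (0 : ℂ) ∈ frontier D) :
    D = {z : ℂ | ∃ r θ : ℝ, 0 < r ∧ r < 1 ∧ θ₀ < θ ∧ θ < θ₁ ∧
      z = r * Complex.exp (θ * Complex.I)} := by
  refine subset_antisymm (fun z hz => ?_) ?_
  · obtain ⟨⟨r, θ, hr, h₀, h₁, rfl⟩, hnorm⟩ := hsub hz
    refine ⟨r, θ, hr, ?_, h₀, h₁, rfl⟩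
    simpa [norm_exp_ofReal_mul_I, abs_of_pos hr] using hnorm
  have h0D : (0 : ℂ) ∈ closure D := frontier_subset_closure h0
  refine hconv.subset_of_isOpen_of_subset_closure hopen (closure_nonempty_iff.mp ⟨0, h0D⟩) ?_ ?_
  · have hsector : {z : ℂ | ∃ r θ : ℝ, 0 < r ∧ r < 1 ∧ θ₀ < θ ∧ θ < θ₁ ∧
        z = r * Complex.exp (θ * Complex.I)} =
        (fun p : ℝ × ℝ => (p.1 : ℂ) * exp (p.2 * I)) '' (Ioo 0 1 ×ˢ Ioo θ₀ θ₁) := by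
      ext z
      simp [and_assoc, eq_comm]
    rw [hsector]
    exact isOpen_image_ofReal_mul_exp (isOpen_Ioo.prod isOpen_Ioo)
      (prod_mono Ioo_subset_Ioi_self (Ioo_subset_Ioo_right hθ'.le))
  · rintro _ ⟨r, θ, hr, hr₁, h₀, h₁, rfl⟩
    have harc : exp (θ * I) ∈ closure D := frontier_subset_closure (hA ⟨θ, h₀.le, h₁.le, rfl⟩)
    simpa [Complex.real_smul] using
      hconv.closure.smul_mem_of_zero_mem h0D harc ⟨hr.le, hr₁.le⟩

/-- If `D` is an open convex subset of `ℂ` with `D ⊆ S ∩ U`,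
`A ⊆ ∂D` and `0 ∈ ∂D`, then `D` is exactly the open circular sector
`S ∩ U = {r e^{iθ} : 0 < r < 1, θ₀ < θ < θ₁}`. -/
theorem stmt_7 (θ₀ θ₁ : ℝ) (hθ : θ₀ < θ₁) (hθ' : θ₁ < θ₀ + 2 * π)
    (D : Set ℂ) (hopen : IsOpen D) (hconv : Convex ℝ D)
    (hsub : D ⊆
      {z : ℂ | ∃ r θ : ℝ, 0 < r ∧ θ₀ < θ ∧ θ < θ₁ ∧ z = r * Complex.exp (θ * Complex.I)} ∩
      {z : ℂ | ‖z‖ < 1})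
    (hA : {z : ℂ | ∃ θ : ℝ, θ₀ ≤ θ ∧ θ ≤ θ₁ ∧ z = Complex.exp (θ * Complex.I)} ⊆ frontier D)
    (h0 : (0 : ℂ) ∈ frontier D) :
    D = {z : ℂ | ∃ r θ : ℝ, 0 < r ∧ r < 1 ∧ θ₀ < θ ∧ θ < θ₁ ∧
      z = r * Complex.exp (θ * Complex.I)} :=
  stmt_7_general θ₀ θ₁ hθ' D hopen hconv hsub hA h0
end
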